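/- arXiv:2503.19206 — 5 statements merged into one kernel-verified Lean document; each statement's English description precedes it below -/
import Mathlib

section
/- For every 1 ≤ n ≤ d, the Gaussian-perturbed pre-training loss at consecutive ideal checkpoints satisfies L̃(W̄₁ⁿ, W̄₂ⁿ) − L̃(W̄₁ⁿ⁻¹, W̄₂ⁿ⁻¹) = 2dγ²σ_n − σ_n²; in particular it is at least (2dγ² − σ_n)σ_n. -/
open MeasureTheory ProbabilityTheory Matrix Real
open scoped NNReal ENNReal

/-- Squared Frobenius norm of a real matrix. -/
noncomputable def frobSq {d : ℕ} (M : Matrix (Fin d) (Fin d) ℝ) : ℝ :=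
  ∑ i, ∑ j, (M i j) ^ 2

/-- The diagonal matrix `(Σ_{:n})^{1/2}`: square roots of the first `n` singular values. -/
noncomputable def sqrtTrunc {d : ℕ} (σ : Fin d → ℝ) (n : ℕ) : Matrix (Fin d) (Fin d) ℝ :=
  Matrix.diagonal fun i => if (i : ℕ) < n then Real.sqrt (σ i) else 0

/-- The ideal stage-`n` checkpoint `W̄₁ⁿ = U (Σ_{:n})^{1/2}`. -/
noncomputable def W1bar {d : ℕ} (U : Matrix (Fin d) (Fin d) ℝ) (σ : Fin d → ℝ) (n : ℕ) :
    Matrix (Fin d) (Fin d) ℝ :=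
  U * sqrtTrunc σ n

/-- The ideal stage-`n` checkpoint `W̄₂ⁿ = (Σ_{:n})^{1/2} Vᵀ`. -/
noncomputable def W2bar {d : ℕ} (V : Matrix (Fin d) (Fin d) ℝ) (σ : Fin d → ℝ) (n : ℕ) :
    Matrix (Fin d) (Fin d) ℝ :=
  sqrtTrunc σ n * Vᵀ

/-- The Gaussian-perturbed pre-training loss
`L̃(W₁, W₂) = E[‖(W₁+Z₁)(W₂+Z₂) − A^pre‖_F²]`. -/
noncomputable def Ltil {d : ℕ} {Ω : Type} [MeasureSpace Ω]
    (Z₁ Z₂ : Ω → Matrix (Fin d) (Fin d) ℝ) (Apre : Matrix (Fin d) (Fin d) ℝ)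
    (W₁ W₂ : Matrix (Fin d) (Fin d) ℝ) : ℝ :=
  ∫ ω, frobSq ((W₁ + Z₁ ω) * (W₂ + Z₂ ω) - Apre) ∂ℙ


lemma gA {b : ℝ} (hb : 0 < b) : ∫ x : ℝ, x * Real.exp (-b * x ^ 2) = 0 := by
  have h := MeasureTheory.integral_neg_eq_self (fun x : ℝ => x * Real.exp (-b * x ^ 2)) volume
  simp only [neg_neg, neg_sq, neg_mul, integral_neg] at h
  simp only [neg_mul]
  linarith

lemma gB_int {b : ℝ} (hb : 0 < b) :
    Integrable (fun x : ℝ => x ^ 2 * Real.exp (-b * x ^ 2)) := by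
  have := integrable_rpow_mul_exp_neg_mul_sq hb (by norm_num : (-1 : ℝ) < 2)
  simpa [Real.rpow_two] using this

lemma gB {b : ℝ} (hb : 0 < b) :
    ∫ x : ℝ, x ^ 2 * Real.exp (-b * x ^ 2) = (2 * b)⁻¹ * Real.sqrt (π / b) := by
  have hint2 := gB_int hb
  have hint0 : Integrable (fun x : ℝ => Real.exp (-b * x ^ 2)) := integrable_exp_neg_mul_sq hb
  have hint1 : Integrable (fun x : ℝ => x * Real.exp (-b * x ^ 2)) :=
    integrable_mul_exp_neg_mul_sq hb
  have hderiv : ∀ x : ℝ, HasDerivAt (fun x : ℝ => -(2 * b)⁻¹ * (x * Real.exp (-b * x ^ 2)))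
      (x ^ 2 * Real.exp (-b * x ^ 2) - (2 * b)⁻¹ * Real.exp (-b * x ^ 2)) x := by
    intro x
    have h1 : HasDerivAt (fun x : ℝ => Real.exp (-b * x ^ 2))
        (Real.exp (-b * x ^ 2) * (-b * (2 * x ^ 1))) x :=
      ((hasDerivAt_pow 2 x).const_mul (-b)).exp
    have h2 : HasDerivAt (fun x : ℝ => x * Real.exp (-b * x ^ 2))
        (1 * Real.exp (-b * x ^ 2) + x * (Real.exp (-b * x ^ 2) * (-b * (2 * x ^ 1)))) x :=
      (hasDerivAt_id x).mul h1
    have h3 := h2.const_mul (-(2 * b)⁻¹)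
    refine h3.congr_deriv ?_
    have hb' : (2 * b) ≠ 0 := by positivity
    field_simp
    ring
  have h0 : ∫ x : ℝ, (x ^ 2 * Real.exp (-b * x ^ 2) - (2 * b)⁻¹ * Real.exp (-b * x ^ 2)) = 0 :=
    integral_eq_zero_of_hasDerivAt_of_integrable hderiv
      (hint2.sub (hint0.const_mul _)) (hint1.const_mul _)
  rw [integral_sub hint2 (hint0.const_mul _), MeasureTheory.integral_const_mul, integral_gaussian] at h0
  linarith

section GaussMoments

variable {v : ℝ≥0}

lemma vpos (hv : v ≠ 0) : (0:ℝ) < v := by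
  have hv0 : (v:ℝ) ≠ 0 := by exact_mod_cast hv
  exact lt_of_le_of_ne v.coe_nonneg (Ne.symm hv0)

lemma pdf_eq (hv : v ≠ 0) (x : ℝ) :
    gaussianPDFReal 0 v x
      = (Real.sqrt (2 * π * v))⁻¹ * Real.exp (-(2 * (v : ℝ))⁻¹ * x ^ 2) := by
  have h : -(x - 0) ^ 2 / (2 * (v:ℝ)) = -(2 * (v : ℝ))⁻¹ * x ^ 2 := by
    rw [sub_zero]; ring
  rw [gaussianPDFReal, h]

lemma gauss_integral_eq (hv : v ≠ 0) (g : ℝ → ℝ) :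
    ∫ x, g x ∂(gaussianReal 0 v) = ∫ x, gaussianPDFReal 0 v x * g x := by
  rw [gaussianReal_of_var_ne_zero _ hv,
    show gaussianPDF 0 v = fun x => ((gaussianPDFReal 0 v x).toNNReal : ℝ≥0∞) from rfl,
    integral_withDensity_eq_integral_smul (measurable_gaussianPDFReal 0 v).real_toNNReal g]
  congr 1
  funext x
  rw [NNReal.smul_def, Real.coe_toNNReal _ (gaussianPDFReal_nonneg 0 v x), smul_eq_mul]

lemma gauss_integrable_iff (hv : v ≠ 0) (g : ℝ → ℝ) :
    Integrable g (gaussianReal 0 v)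
      ↔ Integrable (fun x => gaussianPDFReal 0 v x * g x) volume := by
  rw [gaussianReal_of_var_ne_zero _ hv,
    show gaussianPDF 0 v = fun x => ((gaussianPDFReal 0 v x).toNNReal : ℝ≥0∞) from rfl,
    integrable_withDensity_iff_integrable_smul (measurable_gaussianPDFReal 0 v).real_toNNReal]
  constructor <;> intro h <;> apply h.congr <;> filter_upwards with x <;>
    rw [NNReal.smul_def, Real.coe_toNNReal _ (gaussianPDFReal_nonneg 0 v x), smul_eq_mul]

lemma gauss_int_id (hv : v ≠ 0) : Integrable (fun x : ℝ => x) (gaussianReal 0 v) := by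
  rw [gauss_integrable_iff hv]
  have hv' : (0:ℝ) < v := vpos hv
  have hb : (0:ℝ) < (2 * (v:ℝ))⁻¹ := by positivity
  have : (fun x : ℝ => gaussianPDFReal 0 v x * x)
      = fun x => (Real.sqrt (2 * π * v))⁻¹ * (x * Real.exp (-(2 * (v : ℝ))⁻¹ * x ^ 2)) := by
    funext x; rw [pdf_eq hv]; ring
  rw [this]
  exact (integrable_mul_exp_neg_mul_sq hb).const_mul _

lemma gauss_int_sq (hv : v ≠ 0) : Integrable (fun x : ℝ => x ^ 2) (gaussianReal 0 v) := by
  rw [gauss_integrable_iff hv]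
  have hv' : (0:ℝ) < v := vpos hv
  have hb : (0:ℝ) < (2 * (v:ℝ))⁻¹ := by positivity
  have : (fun x : ℝ => gaussianPDFReal 0 v x * x ^ 2)
      = fun x => (Real.sqrt (2 * π * v))⁻¹ * (x ^ 2 * Real.exp (-(2 * (v : ℝ))⁻¹ * x ^ 2)) := by
    funext x; rw [pdf_eq hv]; ring
  rw [this]
  exact (gB_int hb).const_mul _

lemma gauss_E_id (hv : v ≠ 0) : ∫ x, x ∂(gaussianReal 0 v) = 0 := by
  rw [gauss_integral_eq hv]
  have hv' : (0:ℝ) < v := vpos hv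
  have hb : (0:ℝ) < (2 * (v:ℝ))⁻¹ := by positivity
  have : (fun x : ℝ => gaussianPDFReal 0 v x * x)
      = fun x => (Real.sqrt (2 * π * v))⁻¹ * (x * Real.exp (-(2 * (v : ℝ))⁻¹ * x ^ 2)) := by
    funext x; rw [pdf_eq hv]; ring
  rw [this, MeasureTheory.integral_const_mul, gA hb, mul_zero]

lemma gauss_E_sq (hv : v ≠ 0) : ∫ x, x ^ 2 ∂(gaussianReal 0 v) = (v : ℝ) := by
  rw [gauss_integral_eq hv]
  have hv' : (0:ℝ) < v := vpos hv
  have hb : (0:ℝ) < (2 * (v:ℝ))⁻¹ := by positivity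
  have : (fun x : ℝ => gaussianPDFReal 0 v x * x ^ 2)
      = fun x => (Real.sqrt (2 * π * v))⁻¹ * (x ^ 2 * Real.exp (-(2 * (v : ℝ))⁻¹ * x ^ 2)) := by
    funext x; rw [pdf_eq hv]; ring
  rw [this, MeasureTheory.integral_const_mul, gB hb]
  have h1 : π / (2 * (v:ℝ))⁻¹ = 2 * π * v := by field_simp
  have h2 : (2 * (2 * (v:ℝ))⁻¹)⁻¹ = (v:ℝ) := by field_simp
  rw [h1, h2]
  have h3 : Real.sqrt (2 * π * v) ≠ 0 := by
    refine ne_of_gt (Real.sqrt_pos.mpr ?_)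
    have := pi_pos
    positivity
  field_simp

end GaussMoments

section RV

variable {Ω : Type} [MeasureSpace Ω] [IsProbabilityMeasure (ℙ : Measure Ω)]
variable {γ : ℝ}

lemma rv_moments (hγ : 0 < γ) {V : Ω → ℝ} (hm : Measurable V)
    (hd : Measure.map V ℙ = gaussianReal 0 ⟨γ ^ 2, sq_nonneg γ⟩) :
    Integrable V ℙ ∧ Integrable (fun ω => V ω ^ 2) ℙ ∧
      (∫ ω, V ω ∂ℙ) = 0 ∧ (∫ ω, V ω ^ 2 ∂ℙ) = γ ^ 2 := by
  have hvne : (⟨γ ^ 2, sq_nonneg γ⟩ : ℝ≥0) ≠ 0 := by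
    intro h
    have : γ ^ 2 = 0 := congrArg NNReal.toReal h
    nlinarith
  have h1 : Integrable V ℙ := by
    have := (integrable_map_measure (f := V) (g := fun x : ℝ => x)
      (by rw [hd]; exact aestronglyMeasurable_id) hm.aemeasurable).mp
      (by rw [hd]; exact gauss_int_id hvne)
    exact this
  have h2 : Integrable (fun ω => V ω ^ 2) ℙ := by
    have := (integrable_map_measure (f := V) (g := fun x : ℝ => x ^ 2)
      (by rw [hd]; exact (measurable_id.pow_const 2).aestronglyMeasurable) hm.aemeasurable).mp
      (by rw [hd]; exact gauss_int_sq hvne)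
    exact this
  refine ⟨h1, h2, ?_, ?_⟩
  · have := MeasureTheory.integral_map (φ := V) hm.aemeasurable
      (f := fun x : ℝ => x) (by rw [hd]; exact aestronglyMeasurable_id)
    rw [hd, gauss_E_id hvne] at this
    exact this.symm
  · have := MeasureTheory.integral_map (φ := V) hm.aemeasurable
      (f := fun x : ℝ => x ^ 2)
      (by rw [hd]; exact (measurable_id.pow_const 2).aestronglyMeasurable)
    rw [hd, gauss_E_sq hvne] at this
    exact this.symm

lemma shifted_moments (hγ : 0 < γ) {V : Ω → ℝ} (hm : Measurable V)
    (hd : Measure.map V ℙ = gaussianReal 0 ⟨γ ^ 2, sq_nonneg γ⟩) (c : ℝ) :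
    Integrable (fun ω => c + V ω) ℙ ∧ Integrable (fun ω => (c + V ω) ^ 2) ℙ ∧
      (∫ ω, (c + V ω) ∂ℙ) = c ∧ (∫ ω, (c + V ω) ^ 2 ∂ℙ) = c ^ 2 + γ ^ 2 := by
  obtain ⟨iV, iV2, eV, eV2⟩ := rv_moments hγ hm hd
  have hsq : (fun ω => (c + V ω) ^ 2)
      = fun ω => (c ^ 2 + 2 * c * V ω) + V ω ^ 2 := by
    funext ω; ring
  have i1 : Integrable (fun ω => c + V ω) ℙ := (integrable_const c).add iV
  have i2 : Integrable (fun ω => (c + V ω) ^ 2) ℙ := by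
    rw [hsq]
    exact ((integrable_const (c ^ 2)).add (iV.const_mul (2 * c))).add iV2
  refine ⟨i1, i2, ?_, ?_⟩
  · rw [integral_add (integrable_const c) iV, eV, integral_const]
    simp
  · rw [hsq]
    have e1 : ∫ ω, (c ^ 2 + 2 * c * V ω + V ω ^ 2) ∂ℙ
        = (∫ ω, (c ^ 2 + 2 * c * V ω) ∂ℙ) + ∫ ω, V ω ^ 2 ∂ℙ :=
      integral_add ((integrable_const (c ^ 2)).add (iV.const_mul (2 * c))) iV2
    have e2 : ∫ ω, (c ^ 2 + 2 * c * V ω) ∂ℙ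
        = (∫ _ω, (c ^ 2 : ℝ) ∂ℙ) + ∫ ω, 2 * c * V ω ∂ℙ :=
      integral_add (integrable_const (c ^ 2)) (iV.const_mul (2 * c))
    rw [e1, e2, MeasureTheory.integral_const_mul, eV, eV2, integral_const]
    simp

end RV

lemma Ltil_eq {d : ℕ} {Ω : Type} [MeasureSpace Ω] [IsProbabilityMeasure (ℙ : Measure Ω)]
    {γ : ℝ} (hγ : 0 < γ)
    (Z₁ Z₂ : Ω → Matrix (Fin d) (Fin d) ℝ)
    (hmeas₁ : ∀ i j, Measurable fun ω => Z₁ ω i j)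
    (hmeas₂ : ∀ i j, Measurable fun ω => Z₂ ω i j)
    (hindep : iIndepFun
      (Sum.elim (fun q : Fin d × Fin d => fun ω => Z₁ ω q.1 q.2)
        (fun q : Fin d × Fin d => fun ω => Z₂ ω q.1 q.2)) ℙ)
    (hdist₁ : ∀ i j, Measure.map (fun ω => Z₁ ω i j) ℙ = gaussianReal 0 ⟨γ ^ 2, sq_nonneg γ⟩)
    (hdist₂ : ∀ i j, Measure.map (fun ω => Z₂ ω i j) ℙ = gaussianReal 0 ⟨γ ^ 2, sq_nonneg γ⟩)
    (Apre W₁ W₂ : Matrix (Fin d) (Fin d) ℝ) :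
    Ltil Z₁ Z₂ Apre W₁ W₂
      = frobSq (W₁ * W₂ - Apre) + d * γ ^ 2 * (frobSq W₁ + frobSq W₂) + d ^ 3 * γ ^ 4 := by
  classical
  have hfm : ∀ q, Measurable ((Sum.elim (fun q : Fin d × Fin d => fun ω => Z₁ ω q.1 q.2)
      (fun q : Fin d × Fin d => fun ω => Z₂ ω q.1 q.2)) q) := by
    rintro (⟨i, k⟩ | ⟨k, j⟩)
    exacts [hmeas₁ i k, hmeas₂ k j]
  have key : ∀ i j : Fin d,
      Integrable (fun ω =>
        ((∑ k, (W₁ i k + Z₁ ω i k) * (W₂ k j + Z₂ ω k j)) - Apre i j) ^ 2) ℙ ∧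
      (∫ ω, ((∑ k, (W₁ i k + Z₁ ω i k) * (W₂ k j + Z₂ ω k j)) - Apre i j) ^ 2 ∂ℙ)
        = ((W₁ * W₂ - Apre) i j) ^ 2 + γ ^ 2 * (∑ k, W₁ i k ^ 2)
          + γ ^ 2 * (∑ k, W₂ k j ^ 2) + d * γ ^ 4 := by
    intro i j
    set P : Fin d → Ω → ℝ := fun k ω => (W₁ i k + Z₁ ω i k) * (W₂ k j + Z₂ ω k j) with hPdef
    have hX := fun k => shifted_moments hγ (hmeas₁ i k) (hdist₁ i k) (W₁ i k)
    have hY := fun k => shifted_moments hγ (hmeas₂ k j) (hdist₂ k j) (W₂ k j)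
    have hXY : ∀ k l : Fin d,
        IndepFun (fun ω => W₁ i k + Z₁ ω i k) (fun ω => W₂ l j + Z₂ ω l j) ℙ := by
      intro k l
      have h := hindep.indepFun
        (show (Sum.inl (i, k) : (Fin d × Fin d) ⊕ (Fin d × Fin d)) ≠ Sum.inr (l, j) by simp)
      exact h.comp (measurable_id.const_add (W₁ i k)) (measurable_id.const_add (W₂ l j))
    have hX2Y2 : ∀ k : Fin d,
        IndepFun (fun ω => (W₁ i k + Z₁ ω i k) ^ 2) (fun ω => (W₂ k j + Z₂ ω k j) ^ 2) ℙ := by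
      intro k
      have h := hindep.indepFun
        (show (Sum.inl (i, k) : (Fin d × Fin d) ⊕ (Fin d × Fin d)) ≠ Sum.inr (k, j) by simp)
      exact h.comp ((measurable_id.const_add (W₁ i k)).pow_const 2)
        ((measurable_id.const_add (W₂ k j)).pow_const 2)
    have hPP : ∀ k l : Fin d, k ≠ l → IndepFun (P k) (P l) ℙ := by
      intro k l hkl
      have h := hindep.indepFun_prodMk_prodMk hfm (Sum.inl (i, k)) (Sum.inr (k, j))
        (Sum.inl (i, l)) (Sum.inr (l, j))
        (by simp [hkl]) (by simp) (by simp) (by simp [hkl])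
      exact h.comp
        (φ := fun p : ℝ × ℝ => (W₁ i k + p.1) * (W₂ k j + p.2))
        (ψ := fun p : ℝ × ℝ => (W₁ i l + p.1) * (W₂ l j + p.2))
        ((measurable_fst.const_add _).mul (measurable_snd.const_add _))
        ((measurable_fst.const_add _).mul (measurable_snd.const_add _))
    have iP : ∀ k, Integrable (P k) ℙ := by
      intro k
      have h := (hXY k k).integrable_mul (hX k).1 (hY k).1
      exact h
    have eP : ∀ k, (∫ ω, P k ω ∂ℙ) = W₁ i k * W₂ k j := by
      intro k
      have h := (hXY k k).integral_mul_eq_mul_integral (hX k).1.aestronglyMeasurable (hY k).1.aestronglyMeasurable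
      rw [(hX k).2.2.1, (hY k).2.2.1] at h
      exact h
    have iPP : ∀ k l, Integrable (fun ω => P k ω * P l ω) ℙ := by
      intro k l
      by_cases hkl : k = l
      · subst hkl
        have hre : (fun ω => P k ω * P k ω)
            = fun ω => (W₁ i k + Z₁ ω i k) ^ 2 * (W₂ k j + Z₂ ω k j) ^ 2 := by
          funext ω; simp only [hPdef]; ring
        rw [hre]
        have h := (hX2Y2 k).integrable_mul (hX k).2.1 (hY k).2.1
        exact h
      · have h := (hPP k l hkl).integrable_mul (iP k) (iP l)
        exact h
    have ePP : ∀ k l, (∫ ω, P k ω * P l ω ∂ℙ)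
        = W₁ i k * W₂ k j * (W₁ i l * W₂ l j)
          + (if k = l then γ ^ 2 * W₁ i k ^ 2 + γ ^ 2 * W₂ k j ^ 2 + γ ^ 4 else 0) := by
      intro k l
      by_cases hkl : k = l
      · subst hkl
        simp only [if_pos rfl]
        have hre : (fun ω => P k ω * P k ω)
            = fun ω => (W₁ i k + Z₁ ω i k) ^ 2 * (W₂ k j + Z₂ ω k j) ^ 2 := by
          funext ω; simp only [hPdef]; ring
        have h := (hX2Y2 k).integral_mul_eq_mul_integral (hX k).2.1.aestronglyMeasurable (hY k).2.1.aestronglyMeasurable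
        rw [(hX k).2.2.2, (hY k).2.2.2] at h
        have h2 : (∫ ω, P k ω * P k ω ∂ℙ)
            = (W₁ i k ^ 2 + γ ^ 2) * (W₂ k j ^ 2 + γ ^ 2) := by rw [hre]; exact h
        rw [h2]
        simp only [eq_self_iff_true, if_true]
        ring
      · simp only [if_neg hkl, add_zero]
        have h := (hPP k l hkl).integral_mul_eq_mul_integral (iP k).aestronglyMeasurable (iP l).aestronglyMeasurable
        rw [eP k, eP l] at h
        exact h
    show Integrable (fun ω => ((∑ k, P k ω) - Apre i j) ^ 2) ℙ ∧
      (∫ ω, ((∑ k, P k ω) - Apre i j) ^ 2 ∂ℙ)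
        = ((W₁ * W₂ - Apre) i j) ^ 2 + γ ^ 2 * (∑ k, W₁ i k ^ 2)
          + γ ^ 2 * (∑ k, W₂ k j ^ 2) + d * γ ^ 4
    have hrw : (fun ω => ((∑ k, P k ω) - Apre i j) ^ 2)
        = fun ω => ((∑ k, ∑ l, P k ω * P l ω) - 2 * Apre i j * (∑ k, P k ω))
            + Apre i j ^ 2 := by
      funext ω
      have hs := Finset.sum_mul_sum (Finset.univ) (Finset.univ)
        (fun k => P k ω) (fun l => P l ω)
      rw [← hs]
      ring
    have iSS : Integrable (fun ω => ∑ k, ∑ l, P k ω * P l ω) ℙ :=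
      integrable_finset_sum _ fun k _ => integrable_finset_sum _ fun l _ => iPP k l
    have iS : Integrable (fun ω => ∑ k, P k ω) ℙ := integrable_finset_sum _ fun k _ => iP k
    have iSc : Integrable (fun ω => 2 * Apre i j * (∑ k, P k ω)) ℙ := iS.const_mul _
    have iSub : Integrable
        (fun ω => (∑ k, ∑ l, P k ω * P l ω) - 2 * Apre i j * (∑ k, P k ω)) ℙ := iSS.sub iSc
    constructor
    · rw [hrw]
      exact iSub.add (integrable_const _)
    · rw [hrw, integral_add iSub (integrable_const _),
        integral_sub iSS iSc,
        integral_finset_sum _ (fun k (_ : k ∈ Finset.univ) =>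
          integrable_finset_sum _ fun l _ => iPP k l),
        MeasureTheory.integral_const_mul,
        integral_finset_sum _ (fun k (_ : k ∈ Finset.univ) => iP k),
        integral_const]
      have h5 : ∀ k : Fin d, (∫ ω, ∑ l, P k ω * P l ω ∂ℙ) = ∑ l, ∫ ω, P k ω * P l ω ∂ℙ :=
        fun k => integral_finset_sum _ fun l _ => iPP k l
      simp only [h5]
      have h6 : ∑ k : Fin d, ∑ l : Fin d, (∫ ω, P k ω * P l ω ∂ℙ)
          = (∑ k, W₁ i k * W₂ k j) * (∑ k, W₁ i k * W₂ k j)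
            + ∑ k, (γ ^ 2 * W₁ i k ^ 2 + γ ^ 2 * W₂ k j ^ 2 + γ ^ 4) := by
        rw [Finset.sum_congr rfl fun k (_ : k ∈ Finset.univ) =>
          Finset.sum_congr rfl fun l (_ : l ∈ Finset.univ) => ePP k l]
        rw [Finset.sum_congr rfl fun k (_ : k ∈ Finset.univ) => Finset.sum_add_distrib]
        rw [Finset.sum_add_distrib]
        congr 1
        · exact (Finset.sum_mul_sum _ _ _ _).symm
        · exact Finset.sum_congr rfl fun k _ => by simp
      have h7 : ∑ k : Fin d, (∫ ω, P k ω ∂ℙ) = ∑ k, W₁ i k * W₂ k j :=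
        Finset.sum_congr rfl fun k _ => eP k
      rw [h6, h7]
      have hA : (W₁ * W₂ - Apre) i j = (∑ k, W₁ i k * W₂ k j) - Apre i j := by
        simp [Matrix.sub_apply, Matrix.mul_apply]
      rw [hA]
      have h8 : ∑ k : Fin d, (γ ^ 2 * W₁ i k ^ 2 + γ ^ 2 * W₂ k j ^ 2 + γ ^ 4)
          = γ ^ 2 * (∑ k, W₁ i k ^ 2) + γ ^ 2 * (∑ k, W₂ k j ^ 2) + d * γ ^ 4 := by
        rw [Finset.sum_add_distrib, Finset.sum_add_distrib, ← Finset.mul_sum, ← Finset.mul_sum,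
          Finset.sum_const, Finset.card_univ, Fintype.card_fin, nsmul_eq_mul]
      rw [h8]
      simp only [measure_univ, probReal_univ, ENNReal.toReal_one, one_smul, smul_eq_mul, one_mul]
      ring
  have h0 : Ltil Z₁ Z₂ Apre W₁ W₂
      = ∫ ω, ∑ i, ∑ j,
          ((∑ k, (W₁ i k + Z₁ ω i k) * (W₂ k j + Z₂ ω k j)) - Apre i j) ^ 2 ∂ℙ := by
    rfl
  rw [h0, integral_finset_sum _ (fun i (_ : i ∈ Finset.univ) =>
    integrable_finset_sum _ fun j _ => (key i j).1)]
  have h1 : ∀ i : Fin d, (∫ ω, ∑ j,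
      ((∑ k, (W₁ i k + Z₁ ω i k) * (W₂ k j + Z₂ ω k j)) - Apre i j) ^ 2 ∂ℙ)
      = ∑ j, ∫ ω, ((∑ k, (W₁ i k + Z₁ ω i k) * (W₂ k j + Z₂ ω k j)) - Apre i j) ^ 2 ∂ℙ :=
    fun i => integral_finset_sum _ fun j _ => (key i j).1
  simp only [h1]
  rw [Finset.sum_congr rfl fun i (_ : i ∈ Finset.univ) =>
    Finset.sum_congr rfl fun j (_ : j ∈ Finset.univ) => (key i j).2]
  simp only [Finset.sum_add_distrib, Finset.sum_const, Finset.card_univ, Fintype.card_fin,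
    nsmul_eq_mul]
  have e1 : ∑ i : Fin d, ∑ j : Fin d, ((W₁ * W₂ - Apre) i j) ^ 2 = frobSq (W₁ * W₂ - Apre) := rfl
  have e2 : ∑ i : Fin d, (d : ℝ) * (γ ^ 2 * ∑ k, W₁ i k ^ 2) = d * γ ^ 2 * frobSq W₁ := by
    rw [← Finset.mul_sum, frobSq, ← Finset.mul_sum]
    ring
  have e1 : ∑ x : Fin d, ∑ y : Fin d, ((W₁ * W₂ - Apre) x y) ^ 2 = frobSq (W₁ * W₂ - Apre) :=
    rfl
  have e2 : ∑ x : Fin d, (d : ℝ) * (γ ^ 2 * ∑ k, W₁ x k ^ 2) = d * γ ^ 2 * frobSq W₁ := by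
    rw [← Finset.mul_sum, ← Finset.mul_sum, frobSq]
    ring
  have e3 : (d : ℝ) * ∑ x : Fin d, γ ^ 2 * ∑ k, W₂ k x ^ 2 = d * γ ^ 2 * frobSq W₂ := by
    rw [← Finset.mul_sum, frobSq, Finset.sum_comm]
    ring
  rw [e1, e2, e3]
  ring

lemma frobSq_trace {d : ℕ} (M : Matrix (Fin d) (Fin d) ℝ) :
    frobSq M = Matrix.trace (Mᵀ * M) := by
  simp only [frobSq, Matrix.trace, Matrix.diag, Matrix.mul_apply, Matrix.transpose_apply,
    pow_two]
  exact Finset.sum_comm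

lemma frobSq_mul_left {d : ℕ} {U : Matrix (Fin d) (Fin d) ℝ} (hU' : Uᵀ * U = 1)
    (M : Matrix (Fin d) (Fin d) ℝ) : frobSq (U * M) = frobSq M := by
  rw [frobSq_trace, frobSq_trace, Matrix.transpose_mul, Matrix.mul_assoc,
    ← Matrix.mul_assoc Uᵀ U M, hU', Matrix.one_mul]

lemma frobSq_mul_right {d : ℕ} {V : Matrix (Fin d) (Fin d) ℝ} (hV' : Vᵀ * V = 1)
    (M : Matrix (Fin d) (Fin d) ℝ) : frobSq (M * Vᵀ) = frobSq M := by
  rw [frobSq_trace, frobSq_trace, Matrix.transpose_mul, Matrix.transpose_transpose,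
    Matrix.trace_mul_comm, Matrix.mul_assoc, ← Matrix.mul_assoc Vᵀ V Mᵀ, hV', Matrix.one_mul,
    Matrix.trace_mul_comm]

lemma frobSq_diagonal {d : ℕ} (f : Fin d → ℝ) :
    frobSq (Matrix.diagonal f) = ∑ i, f i ^ 2 := by
  simp [frobSq, Matrix.diagonal_apply, apply_ite (fun x : ℝ => x ^ 2), Finset.sum_ite_eq]


/-- for `1 ≤ n ≤ d`,
`L̃(W̄₁ⁿ, W̄₂ⁿ) − L̃(W̄₁ⁿ⁻¹, W̄₂ⁿ⁻¹) = 2dγ²σ_n − σ_n²`, hence `≥ (2dγ² − σ_n)σ_n`. -/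
theorem gaussian_loss_consecutive_checkpoints {d : ℕ} (hd : 1 ≤ d)
    (U V : Matrix (Fin d) (Fin d) ℝ)
    (hU : U * Uᵀ = 1) (hU' : Uᵀ * U = 1) (hV : V * Vᵀ = 1) (hV' : Vᵀ * V = 1)
    (σ : Fin d → ℝ) (hσpos : ∀ i, 0 < σ i) (hσanti : StrictAnti σ)
    (Apre : Matrix (Fin d) (Fin d) ℝ) (hApre : Apre = U * Matrix.diagonal σ * Vᵀ)
    (γ : ℝ) (hγ : 0 < γ)
    {Ω : Type} [MeasureSpace Ω] [IsProbabilityMeasure (ℙ : Measure Ω)]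
    (Z₁ Z₂ : Ω → Matrix (Fin d) (Fin d) ℝ)
    (hmeas₁ : ∀ i j, Measurable fun ω => Z₁ ω i j)
    (hmeas₂ : ∀ i j, Measurable fun ω => Z₂ ω i j)
    (hindep : iIndepFun
      (Sum.elim (fun q : Fin d × Fin d => fun ω => Z₁ ω q.1 q.2)
        (fun q : Fin d × Fin d => fun ω => Z₂ ω q.1 q.2)) ℙ)
    (hdist₁ : ∀ i j, Measure.map (fun ω => Z₁ ω i j) ℙ
      = gaussianReal 0 ⟨γ ^ 2, sq_nonneg γ⟩)
    (hdist₂ : ∀ i j, Measure.map (fun ω => Z₂ ω i j) ℙ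
      = gaussianReal 0 ⟨γ ^ 2, sq_nonneg γ⟩)
    (n : ℕ) (hn1 : 1 ≤ n) (hnd : n ≤ d) :
    Ltil Z₁ Z₂ Apre (W1bar U σ n) (W2bar V σ n)
        - Ltil Z₁ Z₂ Apre (W1bar U σ (n - 1)) (W2bar V σ (n - 1))
      = 2 * d * γ ^ 2 * σ ⟨n - 1, by omega⟩ - (σ ⟨n - 1, by omega⟩) ^ 2 ∧
    Ltil Z₁ Z₂ Apre (W1bar U σ n) (W2bar V σ n)
        - Ltil Z₁ Z₂ Apre (W1bar U σ (n - 1)) (W2bar V σ (n - 1))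
      ≥ (2 * d * γ ^ 2 - σ ⟨n - 1, by omega⟩) * σ ⟨n - 1, by omega⟩ := by
  have key : ∀ m : ℕ,
      (frobSq (W1bar U σ m * W2bar V σ m - Apre)
          = ∑ i : Fin d, if (i : ℕ) < m then (0 : ℝ) else σ i ^ 2) ∧
      (frobSq (W1bar U σ m) = ∑ i : Fin d, if (i : ℕ) < m then σ i else 0) ∧
      (frobSq (W2bar V σ m) = ∑ i : Fin d, if (i : ℕ) < m then σ i else 0) := by
    intro m
    have hDD : sqrtTrunc σ m * sqrtTrunc σ m
        = Matrix.diagonal (fun i : Fin d => if (i : ℕ) < m then σ i else 0) := by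
      rw [sqrtTrunc, Matrix.diagonal_mul_diagonal]
      refine congrArg Matrix.diagonal (funext fun i => ?_)
      by_cases h : (i : ℕ) < m
      · simp [h, Real.mul_self_sqrt (hσpos i).le]
      · simp [h]
    have hprod : W1bar U σ m * W2bar V σ m - Apre
        = U * Matrix.diagonal (fun i : Fin d => (if (i : ℕ) < m then σ i else 0) - σ i) * Vᵀ := by
      rw [W1bar, W2bar, hApre]
      rw [show U * sqrtTrunc σ m * (sqrtTrunc σ m * Vᵀ) = U * (sqrtTrunc σ m * sqrtTrunc σ m) * Vᵀ
        from by noncomm_ring, hDD, ← Matrix.diagonal_sub]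
      noncomm_ring
    refine ⟨?_, ?_, ?_⟩
    · rw [hprod, frobSq_mul_right hV', frobSq_mul_left hU', frobSq_diagonal]
      refine Finset.sum_congr rfl fun i _ => ?_
      by_cases h : (i : ℕ) < m
      · simp [h]
      · simp [h]
    · rw [W1bar, frobSq_mul_left hU', sqrtTrunc, frobSq_diagonal]
      refine Finset.sum_congr rfl fun i _ => ?_
      by_cases h : (i : ℕ) < m
      · simp [h, Real.sq_sqrt (hσpos i).le]
      · simp [h]
    · rw [W2bar, frobSq_mul_right hV', sqrtTrunc, frobSq_diagonal]
      refine Finset.sum_congr rfl fun i _ => ?_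
      by_cases h : (i : ℕ) < m
      · simp [h, Real.sq_sqrt (hσpos i).le]
      · simp [h]
  have hL : ∀ m : ℕ, Ltil Z₁ Z₂ Apre (W1bar U σ m) (W2bar V σ m)
      = (∑ i : Fin d, if (i : ℕ) < m then (0 : ℝ) else σ i ^ 2)
        + d * γ ^ 2 * ((∑ i : Fin d, if (i : ℕ) < m then σ i else 0)
            + (∑ i : Fin d, if (i : ℕ) < m then σ i else 0))
        + d ^ 3 * γ ^ 4 := by
    intro m
    rw [Ltil_eq hγ Z₁ Z₂ hmeas₁ hmeas₂ hindep hdist₁ hdist₂ Apre _ _,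
      (key m).1, (key m).2.1, (key m).2.2]
  have hic : ∀ i : Fin d, (i = (⟨n - 1, by omega⟩ : Fin d)) ↔ (i : ℕ) = n - 1 := by
    intro i
    constructor
    · intro he; rw [he]
    · intro he; exact Fin.ext he
  have hGdiff : (∑ i : Fin d, if (i : ℕ) < n then σ i else 0)
      = (∑ i : Fin d, if (i : ℕ) < n - 1 then σ i else 0) + σ (⟨n - 1, by omega⟩ : Fin d) := by
    have h1 : ∀ i : Fin d,
        ((if (i : ℕ) < n then σ i else 0) - (if (i : ℕ) < n - 1 then σ i else 0))
          = if i = (⟨n - 1, by omega⟩ : Fin d) then σ i else 0 := by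
      intro i
      rcases Nat.lt_trichotomy (i : ℕ) (n - 1) with h | h | h
      · have h2 : (i : ℕ) < n := by omega
        have h3 : ¬(i : ℕ) = n - 1 := by omega
        simp [h, h2, hic, h3]
      · have h2 : (i : ℕ) < n := by omega
        have h1' : ¬(i : ℕ) < n - 1 := by omega
        simp [h1', h2, hic, h]
        intro h0
        exact absurd h0 (by omega)
      · have h2 : ¬(i : ℕ) < n := by omega
        have h1' : ¬(i : ℕ) < n - 1 := by omega
        have h3 : ¬(i : ℕ) = n - 1 := by omega
        simp [h1', h2, hic, h3]
    have h2 : (∑ i : Fin d, if (i : ℕ) < n then σ i else 0)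
        - (∑ i : Fin d, if (i : ℕ) < n - 1 then σ i else 0) = σ (⟨n - 1, by omega⟩ : Fin d) := by
      rw [← Finset.sum_sub_distrib, Finset.sum_congr rfl fun i _ => h1 i,
        Finset.sum_ite_eq' Finset.univ _ σ]
      simp
    linarith
  have hFdiff : (∑ i : Fin d, if (i : ℕ) < n then (0 : ℝ) else σ i ^ 2)
      = (∑ i : Fin d, if (i : ℕ) < n - 1 then (0 : ℝ) else σ i ^ 2)
        - σ (⟨n - 1, by omega⟩ : Fin d) ^ 2 := by
    have h1 : ∀ i : Fin d,
        ((if (i : ℕ) < n then (0 : ℝ) else σ i ^ 2)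
            - (if (i : ℕ) < n - 1 then (0 : ℝ) else σ i ^ 2))
          = if i = (⟨n - 1, by omega⟩ : Fin d) then -(σ i ^ 2) else 0 := by
      intro i
      rcases Nat.lt_trichotomy (i : ℕ) (n - 1) with h | h | h
      · have h2 : (i : ℕ) < n := by omega
        have h3 : ¬(i : ℕ) = n - 1 := by omega
        simp [h, h2, hic, h3]
      · have h2 : (i : ℕ) < n := by omega
        have h1' : ¬(i : ℕ) < n - 1 := by omega
        simp [h1', h2, hic, h]
        intro h0
        exact absurd h0 (by omega)
      · have h2 : ¬(i : ℕ) < n := by omega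
        have h1' : ¬(i : ℕ) < n - 1 := by omega
        have h3 : ¬(i : ℕ) = n - 1 := by omega
        simp [h1', h2, hic, h3]
    have h2 : (∑ i : Fin d, if (i : ℕ) < n then (0 : ℝ) else σ i ^ 2)
        - (∑ i : Fin d, if (i : ℕ) < n - 1 then (0 : ℝ) else σ i ^ 2)
          = -(σ (⟨n - 1, by omega⟩ : Fin d) ^ 2) := by
      rw [← Finset.sum_sub_distrib, Finset.sum_congr rfl fun i _ => h1 i,
        Finset.sum_ite_eq' Finset.univ _ (fun i => -(σ i ^ 2))]
      simp
    linarith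
  have heq : Ltil Z₁ Z₂ Apre (W1bar U σ n) (W2bar V σ n)
      - Ltil Z₁ Z₂ Apre (W1bar U σ (n - 1)) (W2bar V σ (n - 1))
      = 2 * d * γ ^ 2 * σ (⟨n - 1, by omega⟩ : Fin d)
        - σ (⟨n - 1, by omega⟩ : Fin d) ^ 2 := by
    rw [hL n, hL (n - 1), hGdiff, hFdiff]
    ring
  constructor
  · exact heq
  · have h2 : (2 * (d : ℝ) * γ ^ 2 - σ (⟨n - 1, by omega⟩ : Fin d))
        * σ (⟨n - 1, by omega⟩ : Fin d)
        = 2 * d * γ ^ 2 * σ (⟨n - 1, by omega⟩ : Fin d)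
          - σ (⟨n - 1, by omega⟩ : Fin d) ^ 2 := by ring
    exact ge_of_eq (heq.trans h2.symm)
end

section
/- Let σ, σ₀ > 0, λ ≥ 0, and η > 0 satisfy (λ + 2)·η·(2·max{σ², σ₀²} + λ + λσ₀/σ) < 1, and set σ* = √((σ² + λσ₀²)/(1 + λ)). Then for every k ∈ ℕ, the iterate f^{(k)}(σ₀; η, λ, σ, σ₀) lies in the interval [min{σ, σ₀}, max{σ, σ₀}], and |f^{(k)}(σ₀; η, λ, σ, σ₀) − σ*| ≤ (1 − 2η·min{σ², σ₀²})^k · |σ₀ − σ*|. -/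
set_option maxHeartbeats 1000000

/-- The one-dimensional fine-tuning map `f(x; η, λ, σ, σ₀) = x + 2ηx(σ² − x²) + 2ηλx(σ₀² − x²)`. -/
noncomputable def fstep (η lam s s0 x : ℝ) : ℝ :=
  x + 2 * η * x * (s ^ 2 - x ^ 2) + 2 * η * lam * x * (s0 ^ 2 - x ^ 2)

lemma fstep_aux (σ σ₀ lam η a x : ℝ) (hσ : 0 < σ) (hσ₀ : 0 < σ₀) (hlam : 0 ≤ lam) (hη : 0 < η)
    (ha : (1 + lam) * a ^ 2 = σ ^ 2 + lam * σ₀ ^ 2) (ha0 : 0 ≤ a)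
    (hcond' : (lam + 2) * η * (2 * (max σ σ₀) ^ 2 * σ + lam * σ + lam * σ₀) < σ)
    (hxm : min σ σ₀ ≤ x) (hxM : x ≤ max σ σ₀) (hd : |x - a| ≤ |σ₀ - a|) :
    min σ σ₀ ≤ x + 2 * η * (1 + lam) * x * (a ^ 2 - x ^ 2) ∧
      x + 2 * η * (1 + lam) * x * (a ^ 2 - x ^ 2) ≤ max σ σ₀ ∧
      |x + 2 * η * (1 + lam) * x * (a ^ 2 - x ^ 2) - a|
        ≤ (1 - 2 * η * (min σ σ₀) ^ 2) * |x - a| := by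
  have hm0 : 0 < min σ σ₀ := lt_min hσ hσ₀
  have hx0 : 0 < x := lt_of_lt_of_le hm0 hxm
  have hmσ : min σ σ₀ ≤ σ := min_le_left _ _
  have hmσ₀ : min σ σ₀ ≤ σ₀ := min_le_right _ _
  have hMσ : σ ≤ max σ σ₀ := le_max_left _ _
  have hMσ₀ : σ₀ ≤ max σ σ₀ := le_max_right _ _
  -- a is between min and max
  have hb2 : (min σ σ₀) ^ 2 ≤ a ^ 2 ∧ a ^ 2 ≤ (max σ σ₀) ^ 2 := by
    rcases le_total σ σ₀ with h | h
    · rw [min_eq_left h, max_eq_right h]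
      constructor <;> nlinarith [ha, mul_nonneg hlam (by nlinarith : (0:ℝ) ≤ σ₀ ^ 2 - σ ^ 2)]
    · rw [min_eq_right h, max_eq_left h]
      constructor <;> nlinarith [ha, mul_nonneg hlam (by nlinarith : (0:ℝ) ≤ σ ^ 2 - σ₀ ^ 2)]
  have hsum1 : 0 < a + min σ σ₀ := by linarith
  have hsum2 : 0 < a + max σ σ₀ := by linarith [lt_of_lt_of_le hm0 (le_trans hmσ hMσ)]
  have ham : min σ σ₀ ≤ a := by
    by_contra hc
    push_neg at hc
    exact absurd hb2.1 (by linarith [pow_lt_pow_left₀ hc ha0 (by norm_num : 2 ≠ 0)])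
  have haM : a ≤ max σ σ₀ := by
    by_contra hc
    push_neg at hc
    exact absurd hb2.2
      (by linarith [pow_lt_pow_left₀ hc (le_trans hm0.le (le_trans hmσ hMσ)) (by norm_num : 2 ≠ 0)])
  -- abbreviation facts
  have hq1 : 1 - 2 * η * (min σ σ₀) ^ 2 ≤ 1 := by nlinarith [mul_nonneg hη.le (sq_nonneg (min σ σ₀))]
  have hM0 : 0 < max σ σ₀ := lt_of_lt_of_le hσ hMσ
  -- condition without the lambda terms
  have hC : 0 ≤ (lam + 2) * η * (lam * σ + lam * σ₀) := by positivity
  have h1 : (lam + 2) * η * (2 * (max σ σ₀) ^ 2 * σ) < σ := by nlinarith [hcond', hC]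
  have h2M : 2 * (lam + 2) * η * (max σ σ₀) ^ 2 < 1 :=
    lt_of_mul_lt_mul_right (by nlinarith [h1]) hσ.le
  -- bound x*(x+a) above and below
  have hxaM : x * (x + a) ≤ 2 * (max σ σ₀) ^ 2 := by
    nlinarith [mul_nonneg (sub_nonneg.2 hxM) (by linarith : (0:ℝ) ≤ x + a),
      mul_nonneg hM0.le (sub_nonneg.2 hxM), mul_nonneg hM0.le (sub_nonneg.2 haM)]
  have hxam : 2 * (min σ σ₀) ^ 2 ≤ x * (x + a) := by
    nlinarith [mul_nonneg (sub_nonneg.2 hxm) (by linarith : (0:ℝ) ≤ x + a),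
      mul_nonneg hm0.le (sub_nonneg.2 hxm), mul_nonneg hm0.le (sub_nonneg.2 ham)]
  have hmM2 : (min σ σ₀) ^ 2 ≤ (max σ σ₀) ^ 2 := by
    nlinarith [min_le_max (a := σ) (b := σ₀), hm0]
  -- the contraction estimate
  have hfac : x + 2 * η * (1 + lam) * x * (a ^ 2 - x ^ 2) - a
      = (x - a) * (1 - 2 * η * (1 + lam) * x * (x + a)) := by ring
  have habs : |1 - 2 * η * (1 + lam) * x * (x + a)| ≤ 1 - 2 * η * (min σ σ₀) ^ 2 := by
    rw [abs_le]
    constructor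
    · have hup : 2 * η * (1 + lam) * (x * (x + a)) ≤ 2 * η * (1 + lam) * (2 * (max σ σ₀) ^ 2) :=
        mul_le_mul_of_nonneg_left hxaM (by positivity)
      nlinarith [hup, h2M, mul_le_mul_of_nonneg_left hmM2 (by positivity : (0:ℝ) ≤ 2 * η),
        mul_nonneg (mul_nonneg hη.le hlam) (sq_nonneg (max σ σ₀))]
    · have hlow : 2 * η * (1 + lam) * (2 * (min σ σ₀) ^ 2) ≤ 2 * η * (1 + lam) * (x * (x + a)) :=
        mul_le_mul_of_nonneg_left hxam (by positivity)
      nlinarith [hlow, mul_nonneg (mul_nonneg hη.le hlam) (sq_nonneg (min σ σ₀)),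
        mul_nonneg hη.le (sq_nonneg (min σ σ₀))]
  have hcontr : |x + 2 * η * (1 + lam) * x * (a ^ 2 - x ^ 2) - a|
      ≤ (1 - 2 * η * (min σ σ₀) ^ 2) * |x - a| := by
    rw [hfac, abs_mul, mul_comm]
    exact mul_le_mul_of_nonneg_right habs (abs_nonneg _)
  refine ⟨?_, ?_, hcontr⟩
  · -- lower bound
    rcases le_total σ₀ σ with hss | hss
    · have hmin' : min σ σ₀ = σ₀ := min_eq_right hss
      have hxm' : σ₀ ≤ x := hmin' ▸ hxm
      have ham' : σ₀ ≤ a := hmin' ▸ ham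
      rw [hmin']
      rcases le_total x a with hxa | hxa
      · have hpos : 0 ≤ 2 * η * (1 + lam) * x * (a ^ 2 - x ^ 2) :=
          mul_nonneg (by positivity)
            (by linarith [mul_nonneg (sub_nonneg.2 hxa) (by linarith : (0:ℝ) ≤ a + x)])
        linarith
      · have h1 : a - (x + 2 * η * (1 + lam) * x * (a ^ 2 - x ^ 2))
            ≤ |x + 2 * η * (1 + lam) * x * (a ^ 2 - x ^ 2) - a| := by
          rw [abs_sub_comm]; exact le_abs_self _
        have h3 : |x - a| ≤ a - σ₀ := by
          rw [abs_of_nonpos (by linarith : σ₀ - a ≤ 0)] at hd; linarith [hd]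
        have h4 : (1 - 2 * η * (min σ σ₀) ^ 2) * |x - a| ≤ |x - a| :=
          mul_le_of_le_one_left (abs_nonneg _) hq1
        linarith [hcontr, h1, h3, h4]
    · have hmin' : min σ σ₀ = σ := min_eq_left hss
      have hmax' : max σ σ₀ = σ₀ := max_eq_right hss
      have hxm' : σ ≤ x := hmin' ▸ hxm
      have hxM' : x ≤ σ₀ := hmax' ▸ hxM
      have ham' : σ ≤ a := hmin' ▸ ham
      have haM' : a ≤ σ₀ := hmax' ▸ haM
      rw [hmin']
      rcases le_total x a with hxa | hxa
      · have hpos : 0 ≤ 2 * η * (1 + lam) * x * (a ^ 2 - x ^ 2) :=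
          mul_nonneg (by positivity)
            (by linarith [mul_nonneg (sub_nonneg.2 hxa) (by linarith : (0:ℝ) ≤ a + x)])
        linarith
      · rcases le_total (2 * η * (1 + lam) * x * (x + a)) 1 with hov | hov
        · have hp : 0 ≤ (x - a) * (1 - 2 * η * (1 + lam) * x * (x + a)) :=
            mul_nonneg (by linarith) (by linarith)
          linarith [hp, ham']
        · -- overshoot below, case σ ≤ σ₀
          have hcondσ₀ : (lam + 2) * η * (2 * σ₀ ^ 2 * σ + lam * σ + lam * σ₀) < σ := by
            rw [hmax'] at hcond'; exact hcond'
          have h2Mσ₀ : 2 * (lam + 2) * η * σ₀ ^ 2 < 1 := by rw [hmax'] at h2M; exact h2M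
          have h4s0 : 4 * η * σ₀ ^ 2 < 1 := by
            linarith [h2Mσ₀, mul_nonneg (mul_nonneg hlam hη.le) (sq_nonneg σ₀)]
          have h1lam : (0:ℝ) ≤ 1 + lam := by linarith
          have hTle' : 2 * η * (1 + lam) * x * (x + a) ≤ 4 * η * (1 + lam) * σ₀ ^ 2 := by
            linarith [mul_nonneg (mul_nonneg hη.le h1lam)
                (mul_nonneg (sub_nonneg.2 hxM') (by linarith : (0:ℝ) ≤ x + a)),
              mul_nonneg (mul_nonneg hη.le h1lam) (mul_nonneg hσ₀.le (sub_nonneg.2 hxM')),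
              mul_nonneg (mul_nonneg hη.le h1lam) (mul_nonneg hσ₀.le (sub_nonneg.2 haM'))]
          have hlam0 : 0 < lam := by
            rcases eq_or_lt_of_le hlam with h0 | h0
            · exfalso
              have hl : lam = 0 := h0.symm
              subst hl
              linarith [hov, hTle', h4s0]
            · exact h0
          have hkey1' : (4 * η * (1 + lam) * σ₀ ^ 2 - 1) * σ
              < η * lam * (2 * σ₀ ^ 2 * σ - (lam + 2) * (σ + σ₀)) := by
            linarith [hcondσ₀]
          have hkey2' : (4 * η * (1 + lam) * σ₀ ^ 2 - 1) * σ < 2 * η * lam * σ₀ ^ 2 * σ := by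
            linarith [hkey1', mul_nonneg (mul_nonneg hη.le hlam)
              (mul_nonneg (by linarith : (0:ℝ) ≤ lam + 2) (by linarith : (0:ℝ) ≤ σ + σ₀))]
          have hT2' : 4 * η * (1 + lam) * σ₀ ^ 2 - 1 < 2 * η * lam * σ₀ ^ 2 :=
            lt_of_mul_lt_mul_right hkey2' hσ.le
          have hmain' : (a + σ) * (4 * η * (1 + lam) * σ₀ ^ 2 - 1) ≤ lam * (σ₀ + a) := by
            have p2 := mul_le_mul_of_nonneg_left hT2'.le (by linarith : (0:ℝ) ≤ a + σ)
            linarith [p2,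
              mul_nonneg (mul_nonneg hlam (by linarith : (0:ℝ) ≤ a + σ₀))
                (by linarith : (0:ℝ) ≤ 1 - 4 * η * σ₀ ^ 2),
              mul_nonneg (mul_nonneg (mul_nonneg hη.le hlam) (sq_nonneg σ₀)) (sub_nonneg.2 hss),
              mul_nonneg (mul_nonneg (mul_nonneg hη.le hlam) (sq_nonneg σ₀))
                (by linarith : (0:ℝ) ≤ a + σ₀)]
          have hfacpos' : 0 < (1 + lam) * ((σ₀ + a) * (a + σ)) :=
            mul_pos (by linarith) (mul_pos (by linarith) (by linarith))
          have hprod' : ((σ₀ - a) * (4 * η * (1 + lam) * σ₀ ^ 2 - 1) - (a - σ))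
              * ((1 + lam) * ((σ₀ + a) * (a + σ))) ≤ 0 := by
            have expand : ((σ₀ - a) * (4 * η * (1 + lam) * σ₀ ^ 2 - 1) - (a - σ))
                * ((1 + lam) * ((σ₀ + a) * (a + σ)))
                = (σ₀ ^ 2 - σ ^ 2) * ((4 * η * (1 + lam) * σ₀ ^ 2 - 1) * (a + σ)
                    - lam * (σ₀ + a)) := by
              linear_combination (-((4 * η * (1 + lam) * σ₀ ^ 2 - 1) * (a + σ) + (σ₀ + a))) * ha
            rw [expand]
            exact mul_nonpos_of_nonneg_of_nonpos
              (by linarith [mul_nonneg (sub_nonneg.2 hss) (by linarith : (0:ℝ) ≤ σ₀ + σ)])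
              (by linarith [hmain'])
          have hIneq' : (σ₀ - a) * (4 * η * (1 + lam) * σ₀ ^ 2 - 1) ≤ a - σ := by
            by_contra hcc
            push_neg at hcc
            have hA : 0 < (σ₀ - a) * (4 * η * (1 + lam) * σ₀ ^ 2 - 1) - (a - σ) := by linarith
            linarith [hprod', mul_pos hA hfacpos']
          have hbb' : (x - a) * (2 * η * (1 + lam) * x * (x + a) - 1)
              ≤ (σ₀ - a) * (4 * η * (1 + lam) * σ₀ ^ 2 - 1) :=
            mul_le_mul (by linarith) (by linarith) (by linarith) (by linarith)
          have hg' : a - (x + 2 * η * (1 + lam) * x * (a ^ 2 - x ^ 2))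
              = (x - a) * (2 * η * (1 + lam) * x * (x + a) - 1) := by ring
          linarith [hbb', hIneq', hg']
  · -- upper bound
    rcases le_total σ₀ σ with hss | hss
    · have hmin' : min σ σ₀ = σ₀ := min_eq_right hss
      have hmax' : max σ σ₀ = σ := max_eq_left hss
      have hxm' : σ₀ ≤ x := hmin' ▸ hxm
      have hxM' : x ≤ σ := hmax' ▸ hxM
      have ham' : σ₀ ≤ a := hmin' ▸ ham
      have haM' : a ≤ σ := hmax' ▸ haM
      rw [hmax']
      rcases le_total a x with hxa | hxa
      · have hneg : 2 * η * (1 + lam) * x * (a ^ 2 - x ^ 2) ≤ 0 :=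
          mul_nonpos_of_nonneg_of_nonpos (by positivity)
            (by linarith [mul_nonneg (sub_nonneg.2 hxa) (by linarith : (0:ℝ) ≤ x + a)])
        linarith
      · rcases le_total (2 * η * (1 + lam) * x * (x + a)) 1 with hov | hov
        · have hp : 0 ≤ (a - x) * (1 - 2 * η * (1 + lam) * x * (x + a)) :=
            mul_nonneg (by linarith) (by linarith)
          linarith [hp, haM']
        · -- overshoot above, case σ₀ ≤ σ
          have hcondσ : (lam + 2) * η * (2 * σ ^ 2 * σ + lam * σ + lam * σ₀) < σ := by
            rw [hmax'] at hcond'; exact hcond'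
          have h2Mσ : 2 * (lam + 2) * η * σ ^ 2 < 1 := by rw [hmax'] at h2M; exact h2M
          have h4s : 4 * η * σ ^ 2 < 1 := by
            linarith [h2Mσ, mul_nonneg (mul_nonneg hlam hη.le) (sq_nonneg σ)]
          have h1lam : (0:ℝ) ≤ 1 + lam := by linarith
          have hTle : 2 * η * (1 + lam) * x * (x + a) ≤ 4 * η * (1 + lam) * a ^ 2 := by
            linarith [mul_nonneg (mul_nonneg (mul_nonneg hη.le h1lam) (sub_nonneg.2 hxa))
              (by linarith : (0:ℝ) ≤ 2 * a + x)]
          have hlam0 : 0 < lam := by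
            rcases eq_or_lt_of_le hlam with h0 | h0
            · exfalso
              have hl : lam = 0 := h0.symm
              subst hl
              have ha2 : a ^ 2 = σ ^ 2 := by linarith [ha]
              have he : 4 * η * (1 + 0) * a ^ 2 = 4 * η * σ ^ 2 := by
                linear_combination (4 * η) * ha2
              linarith [hov, hTle, h4s, he]
            · exact h0
          have e : 4 * η * (1 + lam) * a ^ 2 * σ = 4 * η * (σ ^ 2 + lam * σ₀ ^ 2) * σ := by
            linear_combination (4 * η * σ) * ha
          have hkey1 : (4 * η * (1 + lam) * a ^ 2 - 1) * σ
              < η * lam * (4 * σ₀ ^ 2 * σ - 2 * σ ^ 3 - (lam + 2) * σ - (lam + 2) * σ₀) := by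
            linarith [hcondσ, e]
          have hkey2 : (4 * η * (1 + lam) * a ^ 2 - 1) * σ < 2 * η * lam * σ₀ ^ 2 * σ := by
            linarith [hkey1,
              mul_nonneg (mul_nonneg hη.le hlam) (mul_nonneg (by linarith : (0:ℝ) ≤ 2 * σ)
                (by linarith [mul_nonneg (sub_nonneg.2 hss) (by linarith : (0:ℝ) ≤ σ + σ₀)] : (0:ℝ) ≤ σ ^ 2 - σ₀ ^ 2)),
              mul_nonneg (mul_nonneg hη.le hlam)
                (mul_nonneg (by linarith : (0:ℝ) ≤ lam + 2) (by linarith : (0:ℝ) ≤ σ + σ₀))]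
          have hT2 : 4 * η * (1 + lam) * a ^ 2 - 1 < 2 * η * lam * σ₀ ^ 2 :=
            lt_of_mul_lt_mul_right hkey2 hσ.le
          have p1 : 4 * η * σ * σ₀ ^ 2 ≤ σ₀ := by
            linarith [mul_nonneg (mul_nonneg (mul_nonneg hη.le hσ.le) hσ₀.le) (sub_nonneg.2 hss),
              mul_pos hσ₀ (by linarith : (0:ℝ) < 1 - 4 * η * σ ^ 2)]
          have hmain : (σ + a) * (4 * η * (1 + lam) * a ^ 2 - 1) ≤ lam * (a + σ₀) := by
            have p2 := mul_le_mul_of_nonneg_left hT2.le (by linarith : (0:ℝ) ≤ σ + a)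
            have p3 : (σ + a) * (2 * η * lam * σ₀ ^ 2) ≤ 2 * σ * (2 * η * lam * σ₀ ^ 2) :=
              mul_le_mul_of_nonneg_right (by linarith) (by positivity)
            have p4 := mul_le_mul_of_nonneg_left p1 hlam
            linarith [p2, p3, p4, mul_nonneg hlam ha0]
          have hfacpos : 0 < (1 + lam) * ((a + σ₀) * (σ + a)) :=
            mul_pos (by linarith) (mul_pos (by linarith) (by linarith))
          have hprod : ((a - σ₀) * (4 * η * (1 + lam) * a ^ 2 - 1) - (σ - a))
              * ((1 + lam) * ((a + σ₀) * (σ + a))) ≤ 0 := by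
            have expand : ((a - σ₀) * (4 * η * (1 + lam) * a ^ 2 - 1) - (σ - a))
                * ((1 + lam) * ((a + σ₀) * (σ + a)))
                = (σ ^ 2 - σ₀ ^ 2) * ((4 * η * (1 + lam) * a ^ 2 - 1) * (σ + a)
                    - lam * (a + σ₀)) := by
              linear_combination ((4 * η * (1 + lam) * a ^ 2 - 1) * (σ + a) + (a + σ₀)) * ha
            rw [expand]
            exact mul_nonpos_of_nonneg_of_nonpos
              (by linarith [mul_nonneg (sub_nonneg.2 hss) (by linarith : (0:ℝ) ≤ σ + σ₀)])
              (by linarith [hmain])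
          have hIneq : (a - σ₀) * (4 * η * (1 + lam) * a ^ 2 - 1) ≤ σ - a := by
            by_contra hcc
            push_neg at hcc
            have hA : 0 < (a - σ₀) * (4 * η * (1 + lam) * a ^ 2 - 1) - (σ - a) := by linarith
            linarith [hprod, mul_pos hA hfacpos]
          have hbb : (a - x) * (2 * η * (1 + lam) * x * (x + a) - 1)
              ≤ (a - σ₀) * (4 * η * (1 + lam) * a ^ 2 - 1) :=
            mul_le_mul (by linarith) (by linarith) (by linarith) (by linarith)
          have hg : (x + 2 * η * (1 + lam) * x * (a ^ 2 - x ^ 2)) - a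
              = (a - x) * (2 * η * (1 + lam) * x * (x + a) - 1) := by ring
          linarith [hbb, hIneq, hg]
    · have hmax' : max σ σ₀ = σ₀ := max_eq_right hss
      have hxM' : x ≤ σ₀ := hmax' ▸ hxM
      have haM' : a ≤ σ₀ := hmax' ▸ haM
      rw [hmax']
      rcases le_total a x with hxa | hxa
      · have hneg : 2 * η * (1 + lam) * x * (a ^ 2 - x ^ 2) ≤ 0 :=
          mul_nonpos_of_nonneg_of_nonpos (by positivity)
            (by linarith [mul_nonneg (sub_nonneg.2 hxa) (by linarith : (0:ℝ) ≤ x + a)])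
        linarith
      · have h1 : (x + 2 * η * (1 + lam) * x * (a ^ 2 - x ^ 2)) - a
            ≤ |x + 2 * η * (1 + lam) * x * (a ^ 2 - x ^ 2) - a| := le_abs_self _
        have h3 : |x - a| ≤ σ₀ - a := by
          rw [abs_of_nonneg (by linarith : (0:ℝ) ≤ σ₀ - a)] at hd; linarith [hd]
        have h4 : (1 - 2 * η * (min σ σ₀) ^ 2) * |x - a| ≤ |x - a| :=
          mul_le_of_le_one_left (abs_nonneg _) hq1
        linarith [hcontr, h1, h3, h4]

/-- under the step-size condition, the iterates of `f` started at `σ₀` stay in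
`[min{σ, σ₀}, max{σ, σ₀}]` and converge linearly to `σ* = √((σ² + λσ₀²)/(1 + λ))`. -/
theorem fstep_iterates_converge (σ σ₀ lam η : ℝ)
    (hσ : 0 < σ) (hσ₀ : 0 < σ₀) (hlam : 0 ≤ lam) (hη : 0 < η)
    (hcond : (lam + 2) * η * (2 * max (σ ^ 2) (σ₀ ^ 2) + lam + lam * σ₀ / σ) < 1)
    (σs : ℝ) (hσs : σs = Real.sqrt ((σ ^ 2 + lam * σ₀ ^ 2) / (1 + lam))) :
    ∀ k : ℕ,
      (fstep η lam σ σ₀)^[k] σ₀ ∈ Set.Icc (min σ σ₀) (max σ σ₀) ∧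
      |(fstep η lam σ σ₀)^[k] σ₀ - σs|
        ≤ (1 - 2 * η * min (σ ^ 2) (σ₀ ^ 2)) ^ k * |σ₀ - σs| := by
  have hmax2 : max (σ ^ 2) (σ₀ ^ 2) = (max σ σ₀) ^ 2 := by
    rcases le_total σ σ₀ with h | h
    · rw [max_eq_right h, max_eq_right (by nlinarith : σ ^ 2 ≤ σ₀ ^ 2)]
    · rw [max_eq_left h, max_eq_left (by nlinarith : σ₀ ^ 2 ≤ σ ^ 2)]
  have hmin2 : min (σ ^ 2) (σ₀ ^ 2) = (min σ σ₀) ^ 2 := by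
    rcases le_total σ σ₀ with h | h
    · rw [min_eq_left h, min_eq_left (by nlinarith : σ ^ 2 ≤ σ₀ ^ 2)]
    · rw [min_eq_right h, min_eq_right (by nlinarith : σ₀ ^ 2 ≤ σ ^ 2)]
  simp only [hmin2]
  rw [hmax2] at hcond
  -- the fixed point
  have hAnn : 0 ≤ (σ ^ 2 + lam * σ₀ ^ 2) / (1 + lam) := by positivity
  have hs2 : σs ^ 2 = (σ ^ 2 + lam * σ₀ ^ 2) / (1 + lam) := by
    rw [hσs]; exact Real.sq_sqrt hAnn
  have ha : (1 + lam) * σs ^ 2 = σ ^ 2 + lam * σ₀ ^ 2 := by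
    rw [hs2]; field_simp
  have ha0 : 0 ≤ σs := hσs ▸ Real.sqrt_nonneg _
  -- multiplied form of the step-size condition
  have hcond' : (lam + 2) * η * (2 * (max σ σ₀) ^ 2 * σ + lam * σ + lam * σ₀) < σ := by
    have h2 := mul_lt_mul_of_pos_right hcond hσ
    rw [one_mul] at h2
    have e2 : (lam + 2) * η * (lam * σ₀ / σ) * σ = (lam + 2) * η * (lam * σ₀) := by
      field_simp
    nlinarith [h2, e2]
  -- basic bounds on the contraction factor
  have hC0 : 0 ≤ (lam + 2) * η * (lam * σ + lam * σ₀) := by positivity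
  have h1 : (lam + 2) * η * (2 * (max σ σ₀) ^ 2 * σ) < σ := by nlinarith [hcond', hC0]
  have h2M : 2 * (lam + 2) * η * (max σ σ₀) ^ 2 < 1 :=
    lt_of_mul_lt_mul_right (by nlinarith [h1]) hσ.le
  have hmM : min σ σ₀ ≤ max σ σ₀ := min_le_max
  have hm0 : 0 < min σ σ₀ := lt_min hσ hσ₀
  have hmM2 : (min σ σ₀) ^ 2 ≤ (max σ σ₀) ^ 2 := by nlinarith [hmM, hm0]
  have hq0 : 0 ≤ 1 - 2 * η * (min σ σ₀) ^ 2 := by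
    have h3 : 2 * η * (min σ σ₀) ^ 2 ≤ 2 * η * (max σ σ₀) ^ 2 :=
      mul_le_mul_of_nonneg_left hmM2 (by positivity)
    have h4 : 0 ≤ lam * η * (max σ σ₀) ^ 2 :=
      mul_nonneg (mul_nonneg hlam hη.le) (sq_nonneg _)
    linarith [h2M, h3, h4]
  have hq1 : 1 - 2 * η * (min σ σ₀) ^ 2 ≤ 1 := by
    nlinarith [mul_nonneg hη.le (sq_nonneg (min σ σ₀))]
  -- rewriting of the step map
  have hstep : ∀ y : ℝ, fstep η lam σ σ₀ y = y + 2 * η * (1 + lam) * y * (σs ^ 2 - y ^ 2) := by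
    intro y
    simp only [fstep]
    linear_combination (-(2 * η * y)) * ha
  intro k
  induction k with
  | zero =>
    refine ⟨⟨min_le_right _ _, le_max_right _ _⟩, ?_⟩
    simp
  | succ n ih =>
    obtain ⟨⟨hm1, hM1⟩, hdist⟩ := ih
    have hd' : |(fstep η lam σ σ₀)^[n] σ₀ - σs| ≤ |σ₀ - σs| := by
      refine le_trans hdist ?_
      calc (1 - 2 * η * (min σ σ₀) ^ 2) ^ n * |σ₀ - σs|
          ≤ 1 * |σ₀ - σs| :=
            mul_le_mul_of_nonneg_right (pow_le_one₀ hq0 hq1) (abs_nonneg _)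
        _ = |σ₀ - σs| := one_mul _
    obtain ⟨hg1, hg2, hg3⟩ := fstep_aux σ σ₀ lam η σs ((fstep η lam σ σ₀)^[n] σ₀)
      hσ hσ₀ hlam hη ha ha0 hcond' hm1 hM1 hd'
    rw [Function.iterate_succ_apply', hstep ((fstep η lam σ σ₀)^[n] σ₀)]
    refine ⟨⟨hg1, hg2⟩, ?_⟩
    calc |(fstep η lam σ σ₀)^[n] σ₀
          + 2 * η * (1 + lam) * (fstep η lam σ σ₀)^[n] σ₀
            * (σs ^ 2 - ((fstep η lam σ σ₀)^[n] σ₀) ^ 2) - σs|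
        ≤ (1 - 2 * η * (min σ σ₀) ^ 2) * |(fstep η lam σ σ₀)^[n] σ₀ - σs| := hg3
      _ ≤ (1 - 2 * η * (min σ σ₀) ^ 2)
            * ((1 - 2 * η * (min σ σ₀) ^ 2) ^ n * |σ₀ - σs|) :=
            mul_le_mul_of_nonneg_left hdist hq0
      _ = (1 - 2 * η * (min σ σ₀) ^ 2) ^ (n + 1) * |σ₀ - σs| := by ring
end

section
/- Fix 0 ≤ n ≤ d and let (Ŵ₁(k), Ŵ₂(k))_{k≥0} be generated by iterating the infinite-batch fine-tuning update with anchor θ₀ = W̄₁ⁿ·W̄₂ⁿ, starting from (Ŵ₁(0), Ŵ₂(0)) = (W̄₁ⁿ, W̄₂ⁿ). Then for every k ≥ 0 there is a diagonal matrix D(k) with Ŵ₁(k) = U·D(k) and Ŵ₂(k) = D(k)·Vᵀ, whose i-th diagonal entry equals f^{(k)}(√σ_i; η, λ, √(σ^ft_i), √σ_i) for i ≤ n and equals 0 for i > n. -/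
open Matrix

open scoped Matrix.Norms.L2Operator

/-- One finite-batch fine-tuning update with covariance `S`, target `A^ft`, anchor `θ₀`,
learning rate `η` and regularization `λ`.  The infinite-batch update is the case `S = 1`. -/
noncomputable def ftStep {d : ℕ} (η lam : ℝ) (Aft θ₀ S : Matrix (Fin d) (Fin d) ℝ)
    (W : Matrix (Fin d) (Fin d) ℝ × Matrix (Fin d) (Fin d) ℝ) :
    Matrix (Fin d) (Fin d) ℝ × Matrix (Fin d) (Fin d) ℝ :=
  (W.1 - (2 * η) • ((W.1 * W.2 - Aft) * S * W.2ᵀ)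
      - (2 * η * lam) • ((W.1 * W.2 - θ₀) * W.2ᵀ),
   W.2 - (2 * η) • (W.1ᵀ * S * (W.1 * W.2 - Aft))
      - (2 * η * lam) • (W.1ᵀ * (W.1 * W.2 - θ₀)))

lemma ftStep_diag {d : ℕ} (U V : Matrix (Fin d) (Fin d) ℝ)
    (hU' : Uᵀ * U = 1) (hV' : Vᵀ * V = 1)
    (η lam : ℝ) (σft T D : Fin d → ℝ) :
    ftStep η lam (U * Matrix.diagonal σft * Vᵀ) (U * Matrix.diagonal T * Vᵀ) 1
      (U * Matrix.diagonal D, Matrix.diagonal D * Vᵀ)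
    = (U * Matrix.diagonal
        (fun i => D i - 2*η*(D i * D i - σft i)*D i - 2*η*lam*(D i * D i - T i)*D i),
       Matrix.diagonal
        (fun i => D i - 2*η*(D i * D i - σft i)*D i - 2*η*lam*(D i * D i - T i)*D i) * Vᵀ) := by
  have key : ∀ E : Fin d → ℝ,
      U * Matrix.diagonal D * (Matrix.diagonal D * Vᵀ) - U * Matrix.diagonal E * Vᵀ
        = U * Matrix.diagonal (fun i => D i * D i - E i) * Vᵀ := by
    intro E
    rw [mul_assoc U (Matrix.diagonal D), ← mul_assoc (Matrix.diagonal D),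
      Matrix.diagonal_mul_diagonal, ← mul_assoc U, ← sub_mul, ← mul_sub,
      ← Matrix.diagonal_sub]
  have hT2 : (Matrix.diagonal D * Vᵀ)ᵀ = V * Matrix.diagonal D := by
    rw [Matrix.transpose_mul, Matrix.transpose_transpose, Matrix.diagonal_transpose]
  have hT1 : (U * Matrix.diagonal D)ᵀ = Matrix.diagonal D * Uᵀ := by
    rw [Matrix.transpose_mul, Matrix.diagonal_transpose]
  have hdd : (Matrix.diagonal
        (fun i => D i - 2*η*(D i * D i - σft i)*D i - 2*η*lam*(D i * D i - T i)*D i) :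
        Matrix (Fin d) (Fin d) ℝ)
      = Matrix.diagonal D
        - (2*η) • Matrix.diagonal (fun i => (D i * D i - σft i) * D i)
        - (2*η*lam) • Matrix.diagonal (fun i => (D i * D i - T i) * D i) := by
    rw [← Matrix.diagonal_smul, ← Matrix.diagonal_smul, Matrix.diagonal_sub,
      Matrix.diagonal_sub]
    refine congrArg Matrix.diagonal ?_
    funext i
    simp only [Pi.sub_apply, Pi.smul_apply, smul_eq_mul]
    ring
  have hdd2 : (Matrix.diagonal
        (fun i => D i - 2*η*(D i * D i - σft i)*D i - 2*η*lam*(D i * D i - T i)*D i) :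
        Matrix (Fin d) (Fin d) ℝ)
      = Matrix.diagonal D
        - (2*η) • Matrix.diagonal (fun i => D i * (D i * D i - σft i))
        - (2*η*lam) • Matrix.diagonal (fun i => D i * (D i * D i - T i)) := by
    rw [← Matrix.diagonal_smul, ← Matrix.diagonal_smul, Matrix.diagonal_sub,
      Matrix.diagonal_sub]
    refine congrArg Matrix.diagonal ?_
    funext i
    simp only [Pi.sub_apply, Pi.smul_apply, smul_eq_mul]
    ring
  simp only [ftStep, mul_one, key, hT2, hT1]
  refine Prod.ext ?_ ?_
  · dsimp only
    have h1 : ∀ E : Fin d → ℝ,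
        U * Matrix.diagonal E * Vᵀ * (V * Matrix.diagonal D)
          = U * Matrix.diagonal (fun i => E i * D i) := by
      intro E
      rw [mul_assoc (U * Matrix.diagonal E), ← mul_assoc Vᵀ, hV', one_mul, mul_assoc,
        Matrix.diagonal_mul_diagonal]
    rw [h1, h1, ← Matrix.mul_smul, ← Matrix.mul_smul, ← Matrix.mul_sub, ← Matrix.mul_sub, hdd]
  · dsimp only
    have h2 : ∀ E : Fin d → ℝ,
        Matrix.diagonal D * Uᵀ * (U * Matrix.diagonal E * Vᵀ)
          = Matrix.diagonal (fun i => D i * E i) * Vᵀ := by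
      intro E
      rw [show Matrix.diagonal D * Uᵀ * (U * Matrix.diagonal E * Vᵀ)
          = Matrix.diagonal D * (Uᵀ * U) * (Matrix.diagonal E * Vᵀ) by
            simp only [mul_assoc], hU', mul_one, ← mul_assoc, Matrix.diagonal_mul_diagonal]
    rw [h2, h2, ← Matrix.smul_mul, ← Matrix.smul_mul, ← Matrix.sub_mul, ← Matrix.sub_mul, hdd2]

/-- the infinite-batch fine-tuning iterates started from the ideal stage-`n`
checkpoint stay of the form `(U D(k), D(k) Vᵀ)` with `D(k)` diagonal, whose `i`-th entry is
`f^{(k)}(√σ_i; η, λ, √σ^ft_i, √σ_i)` for `i ≤ n` and `0` for `i > n`. -/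
theorem infinite_batch_iterates_diagonal {d : ℕ} (hd : 1 ≤ d)
    (U V : Matrix (Fin d) (Fin d) ℝ)
    (hU : U * Uᵀ = 1) (hU' : Uᵀ * U = 1) (hV : V * Vᵀ = 1) (hV' : Vᵀ * V = 1)
    (σ : Fin d → ℝ) (hσpos : ∀ i, 0 < σ i) (hσanti : StrictAnti σ)
    (σft : Fin d → ℝ) (hσftpos : ∀ i, 0 < σft i)
    (Aft : Matrix (Fin d) (Fin d) ℝ) (hAft : Aft = U * Matrix.diagonal σft * Vᵀ)
    (η lam : ℝ) (hη : 0 < η) (hlam : 0 ≤ lam)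
    (n : ℕ) (hnd : n ≤ d)
    (θ₀ : Matrix (Fin d) (Fin d) ℝ) (hθ₀ : θ₀ = W1bar U σ n * W2bar V σ n) :
    ∀ k : ℕ, ∃ D : Fin d → ℝ,
      ((ftStep η lam Aft θ₀ 1)^[k] (W1bar U σ n, W2bar V σ n)).1 = U * Matrix.diagonal D ∧
      ((ftStep η lam Aft θ₀ 1)^[k] (W1bar U σ n, W2bar V σ n)).2 = Matrix.diagonal D * Vᵀ ∧
      ∀ i : Fin d, D i =
        if (i : ℕ) < n then
          (fstep η lam (Real.sqrt (σft i)) (Real.sqrt (σ i)))^[k] (Real.sqrt (σ i))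
        else 0 := by
  set T : Fin d → ℝ := fun i => if (i : ℕ) < n then σ i else 0 with hT
  have hθ₀' : θ₀ = U * Matrix.diagonal T * Vᵀ := by
    rw [hθ₀]
    unfold W1bar W2bar sqrtTrunc
    rw [mul_assoc U, ← mul_assoc (Matrix.diagonal _), Matrix.diagonal_mul_diagonal,
      ← mul_assoc U]
    have hfun : (fun i : Fin d => (if (i : ℕ) < n then Real.sqrt (σ i) else 0) *
        (if (i : ℕ) < n then Real.sqrt (σ i) else 0)) = T := by
      funext i
      by_cases h : (i : ℕ) < n <;>
        simp [hT, h, Real.mul_self_sqrt (hσpos i).le]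
    rw [hfun]
  intro k
  induction k with
  | zero =>
    refine ⟨fun i => if (i : ℕ) < n then Real.sqrt (σ i) else 0, ?_, ?_, ?_⟩
    · simp [W1bar, sqrtTrunc]
    · simp [W2bar, sqrtTrunc]
    · intro i; simp
  | succ k ih =>
    obtain ⟨D, h1, h2, h3⟩ := ih
    have hDzero : ∀ i : Fin d, ¬ (i : ℕ) < n → D i = 0 := by
      intro i hi; rw [h3 i, if_neg hi]
    have hp : (ftStep η lam Aft θ₀ 1)^[k] (W1bar U σ n, W2bar V σ n)
        = (U * Matrix.diagonal D, Matrix.diagonal D * Vᵀ) := by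
      rw [Prod.ext_iff]; exact ⟨h1, h2⟩
    refine ⟨fun i => fstep η lam (Real.sqrt (σft i)) (Real.sqrt (σ i)) (D i), ?_, ?_, ?_⟩
    · rw [Function.iterate_succ_apply', hp, hAft, hθ₀', ftStep_diag U V hU' hV']
      dsimp only
      congr 1
      refine congrArg Matrix.diagonal ?_
      funext i
      by_cases h : (i : ℕ) < n
      · simp only [fstep, Real.sq_sqrt (hσftpos i).le, Real.sq_sqrt (hσpos i).le, hT, if_pos h]
        ring
      · simp [fstep, hDzero i h]
    · rw [Function.iterate_succ_apply', hp, hAft, hθ₀', ftStep_diag U V hU' hV']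
      dsimp only
      congr 1
      refine congrArg Matrix.diagonal ?_
      funext i
      by_cases h : (i : ℕ) < n
      · simp only [fstep, Real.sq_sqrt (hσftpos i).le, Real.sq_sqrt (hσpos i).le, hT, if_pos h]
        ring
      · simp [fstep, hDzero i h]
    · intro i
      dsimp only
      by_cases h : (i : ℕ) < n
      · rw [if_pos h, Function.iterate_succ_apply']
        rw [h3 i, if_pos h]
      · rw [if_neg h, hDzero i h]
        simp [fstep]
end

section
/- Let (W₁, W₂) be a well-conditioned pair with θ = W₁W₂, let θ₀ ∈ ℝ^{d×d} be any anchor, and let S be a symmetric d×d matrix with ‖S − I‖_op ≤ ε. Let (Ŵ₁', Ŵ₂') be the result of one infinite-batch fine-tuning update applied to (W₁, W₂) with anchor θ₀, and let (W₁', W₂') be the result of one finite-batch fine-tuning update with covariance S applied to (W₁, W₂) with anchor θ₀. Then ‖Ŵ₁' − W₁'‖_op ≤ 32·η·ε·Γ^{3/2} and ‖Ŵ₂' − W₂'‖_op ≤ 32·η·ε·Γ^{3/2}. -/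
open Matrix

open scoped Matrix.Norms.L2Operator

lemma aux_norm_one_le {d : ℕ} : ‖(1 : Matrix (Fin d) (Fin d) ℝ)‖ ≤ 1 := by
  have h := Matrix.l2_opNorm_conjTranspose_mul_self (1 : Matrix (Fin d) (Fin d) ℝ)
  simp only [conjTranspose_one, one_mul] at h
  nlinarith [norm_nonneg (1 : Matrix (Fin d) (Fin d) ℝ)]

lemma aux_conjT {d : ℕ} (A : Matrix (Fin d) (Fin d) ℝ) : Aᴴ = Aᵀ := by
  ext i j; simp [Matrix.conjTranspose_apply]

lemma aux_normT {d : ℕ} (A : Matrix (Fin d) (Fin d) ℝ) : ‖Aᵀ‖ = ‖A‖ := by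
  rw [← aux_conjT]; exact Matrix.l2_opNorm_conjTranspose A

lemma aux_unitary_norm_le {d : ℕ} (U : Matrix (Fin d) (Fin d) ℝ) (h : Uᵀ * U = 1) :
    ‖U‖ ≤ 1 := by
  have h2 := Matrix.l2_opNorm_conjTranspose_mul_self U
  rw [aux_conjT, h] at h2
  have h3 : ‖(1 : Matrix (Fin d) (Fin d) ℝ)‖ ≤ 1 := aux_norm_one_le
  nlinarith [norm_nonneg U]

lemma aux_diag_norm_le {d : ℕ} (v : Fin d → ℝ) {c : ℝ} (hc : 0 ≤ c)
    (h : ∀ i, |v i| ≤ c) : ‖Matrix.diagonal v‖ ≤ c := by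
  rw [Matrix.l2_opNorm_def]
  refine ContinuousLinearMap.opNorm_le_bound _ hc fun x => ?_
  have h1 : ((Matrix.toEuclideanLin.trans LinearMap.toContinuousLinearMap)
      (Matrix.diagonal v)) x = (EuclideanSpace.equiv (Fin d) ℝ).symm (Matrix.diagonal v *ᵥ x) := rfl
  rw [h1]
  rw [EuclideanSpace.norm_eq, EuclideanSpace.norm_eq]
  have hc2 : c * Real.sqrt (∑ i, ‖x i‖ ^ 2) = Real.sqrt (c ^ 2 * ∑ i, ‖x i‖ ^ 2) := by
    rw [Real.sqrt_mul (sq_nonneg c), Real.sqrt_sq hc]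
  rw [hc2]
  apply Real.sqrt_le_sqrt
  rw [Finset.mul_sum]
  apply Finset.sum_le_sum
  intro i _
  have h2 : (PiLp.continuousLinearEquiv 2 ℝ fun _ : Fin d => ℝ).symm
      (Matrix.diagonal v *ᵥ x) i = v i * x i := Matrix.mulVec_diagonal v x i
  rw [h2]; simp only [Real.norm_eq_abs]; rw [abs_mul, mul_pow]
  have hv := h i
  have hv2 : |v i| ^ 2 ≤ c ^ 2 := by nlinarith [abs_nonneg (v i)]
  nlinarith [sq_nonneg (|x i|)]

/-- one finite-batch update with covariance `S` (`‖S − I‖_op ≤ ε`) differs from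
one infinite-batch update by at most `32ηεΓ^{3/2}` in each component (operator norm), for any
well-conditioned pair. -/
theorem one_step_finite_vs_infinite_batch {d : ℕ} (hd : 1 ≤ d)
    (U V : Matrix (Fin d) (Fin d) ℝ)
    (hU : U * Uᵀ = 1) (hU' : Uᵀ * U = 1) (hV : V * Vᵀ = 1) (hV' : Vᵀ * V = 1)
    (σ : Fin d → ℝ) (hσpos : ∀ i, 0 < σ i) (hσanti : StrictAnti σ)
    (σft : Fin d → ℝ) (hσftpos : ∀ i, 0 < σft i)
    (Aft : Matrix (Fin d) (Fin d) ℝ) (hAft : Aft = U * Matrix.diagonal σft * Vᵀ)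
    (Γ : ℝ) (hΓ : Γ = max (σ ⟨0, hd⟩) (Finset.univ.sup' ⟨⟨0, hd⟩, Finset.mem_univ _⟩ σft))
    (η lam : ℝ) (hη : 0 < η) (hlam : 0 ≤ lam)
    (θ₀ : Matrix (Fin d) (Fin d) ℝ)
    (ε : ℝ) (S : Matrix (Fin d) (Fin d) ℝ) (hSsymm : Sᵀ = S) (hS : ‖S - 1‖ ≤ ε)
    (W₁ W₂ : Matrix (Fin d) (Fin d) ℝ)
    (hW₁ : ‖W₁‖ ≤ 2 * Real.sqrt Γ) (hW₂ : ‖W₂‖ ≤ 2 * Real.sqrt Γ) :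
    ‖(ftStep η lam Aft θ₀ 1 (W₁, W₂)).1 - (ftStep η lam Aft θ₀ S (W₁, W₂)).1‖
        ≤ 32 * η * ε * Γ ^ ((3 : ℝ) / 2) ∧
    ‖(ftStep η lam Aft θ₀ 1 (W₁, W₂)).2 - (ftStep η lam Aft θ₀ S (W₁, W₂)).2‖
        ≤ 32 * η * ε * Γ ^ ((3 : ℝ) / 2) := by
  have hΓ0 : 0 < Γ := lt_of_lt_of_le (hσpos ⟨0, hd⟩) (hΓ ▸ le_max_left _ _)
  have hsqrt0 : 0 ≤ Real.sqrt Γ := Real.sqrt_nonneg Γ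
  have hsq : Real.sqrt Γ * Real.sqrt Γ = Γ := Real.mul_self_sqrt hΓ0.le
  have hε0 : 0 ≤ ε := le_trans (norm_nonneg _) hS
  have hrpow : Γ ^ ((3 : ℝ) / 2) = Γ * Real.sqrt Γ := by
    rw [show (3 : ℝ) / 2 = 1 + 1 / 2 by norm_num, Real.rpow_add hΓ0, Real.rpow_one,
      ← Real.sqrt_eq_rpow]
  -- ‖Aft‖ ≤ Γ
  have hDle : ‖Matrix.diagonal σft‖ ≤ Γ := by
    apply aux_diag_norm_le _ hΓ0.le
    intro i
    rw [abs_of_pos (hσftpos i)]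
    exact le_trans (Finset.le_sup' σft (Finset.mem_univ i)) (hΓ ▸ le_max_right _ _)
  have hUle : ‖U‖ ≤ 1 := aux_unitary_norm_le U hU'
  have hVTle : ‖Vᵀ‖ ≤ 1 := aux_unitary_norm_le Vᵀ (by rw [Matrix.transpose_transpose]; exact hV)
  have hAle : ‖Aft‖ ≤ Γ := by
    rw [hAft]
    calc ‖U * Matrix.diagonal σft * Vᵀ‖ ≤ ‖U * Matrix.diagonal σft‖ * ‖Vᵀ‖ :=
          Matrix.l2_opNorm_mul _ _
      _ ≤ ‖U‖ * ‖Matrix.diagonal σft‖ * ‖Vᵀ‖ := by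
          apply mul_le_mul_of_nonneg_right (Matrix.l2_opNorm_mul _ _) (norm_nonneg _)
      _ ≤ 1 * Γ * 1 := by
          apply mul_le_mul _ hVTle (norm_nonneg _) (by linarith)
          exact mul_le_mul hUle hDle (norm_nonneg _) zero_le_one
      _ = Γ := by ring
  have hMle : ‖W₁ * W₂ - Aft‖ ≤ 5 * Γ := by
    calc ‖W₁ * W₂ - Aft‖ ≤ ‖W₁ * W₂‖ + ‖Aft‖ := norm_sub_le _ _
      _ ≤ ‖W₁‖ * ‖W₂‖ + Γ := add_le_add (Matrix.l2_opNorm_mul _ _) hAle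
      _ ≤ (2 * Real.sqrt Γ) * (2 * Real.sqrt Γ) + Γ := by
          have := mul_le_mul hW₁ hW₂ (norm_nonneg _) (by positivity)
          linarith
      _ = 5 * Γ := by nlinarith
  have hM0 : (0:ℝ) ≤ 5 * Γ := by linarith
  constructor
  · have key : (ftStep η lam Aft θ₀ 1 (W₁, W₂)).1 - (ftStep η lam Aft θ₀ S (W₁, W₂)).1
        = (2 * η) • ((W₁ * W₂ - Aft) * (S - 1) * W₂ᵀ) := by
      simp only [ftStep, mul_one, mul_sub, sub_mul, smul_sub]
      abel
    rw [key, norm_smul, Real.norm_eq_abs, abs_of_pos (by linarith)]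
    have hW2T : ‖W₂ᵀ‖ ≤ 2 * Real.sqrt Γ := by rw [aux_normT]; exact hW₂
    have step : ‖(W₁ * W₂ - Aft) * (S - 1) * W₂ᵀ‖ ≤ (5 * Γ) * ε * (2 * Real.sqrt Γ) := by
      calc ‖(W₁ * W₂ - Aft) * (S - 1) * W₂ᵀ‖ ≤ ‖(W₁ * W₂ - Aft) * (S - 1)‖ * ‖W₂ᵀ‖ :=
            Matrix.l2_opNorm_mul _ _
        _ ≤ (‖W₁ * W₂ - Aft‖ * ‖S - 1‖) * ‖W₂ᵀ‖ :=
            mul_le_mul_of_nonneg_right (Matrix.l2_opNorm_mul _ _) (norm_nonneg _)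
        _ ≤ ((5 * Γ) * ε) * (2 * Real.sqrt Γ) := by
            apply mul_le_mul _ hW2T (norm_nonneg _) (by positivity)
            exact mul_le_mul hMle hS (norm_nonneg _) hM0
    calc 2 * η * ‖(W₁ * W₂ - Aft) * (S - 1) * W₂ᵀ‖
        ≤ 2 * η * ((5 * Γ) * ε * (2 * Real.sqrt Γ)) := by
          apply mul_le_mul_of_nonneg_left step (by linarith)
      _ ≤ 32 * η * ε * Γ ^ ((3 : ℝ) / 2) := by
          rw [hrpow]; nlinarith [mul_nonneg (mul_nonneg hη.le hε0) (mul_nonneg hΓ0.le hsqrt0)]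
  · have key : (ftStep η lam Aft θ₀ 1 (W₁, W₂)).2 - (ftStep η lam Aft θ₀ S (W₁, W₂)).2
        = (2 * η) • (W₁ᵀ * (S - 1) * (W₁ * W₂ - Aft)) := by
      simp only [ftStep, mul_one, mul_sub, sub_mul, smul_sub]
      abel
    rw [key, norm_smul, Real.norm_eq_abs, abs_of_pos (by linarith)]
    have hW1T : ‖W₁ᵀ‖ ≤ 2 * Real.sqrt Γ := by rw [aux_normT]; exact hW₁
    have step : ‖W₁ᵀ * (S - 1) * (W₁ * W₂ - Aft)‖ ≤ (2 * Real.sqrt Γ) * ε * (5 * Γ) := by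
      calc ‖W₁ᵀ * (S - 1) * (W₁ * W₂ - Aft)‖ ≤ ‖W₁ᵀ * (S - 1)‖ * ‖W₁ * W₂ - Aft‖ :=
            Matrix.l2_opNorm_mul _ _
        _ ≤ (‖W₁ᵀ‖ * ‖S - 1‖) * ‖W₁ * W₂ - Aft‖ :=
            mul_le_mul_of_nonneg_right (Matrix.l2_opNorm_mul _ _) (norm_nonneg _)
        _ ≤ ((2 * Real.sqrt Γ) * ε) * (5 * Γ) := by
            apply mul_le_mul _ hMle (norm_nonneg _) (by positivity)
            exact mul_le_mul hW1T hS (norm_nonneg _) (by positivity)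
    calc 2 * η * ‖W₁ᵀ * (S - 1) * (W₁ * W₂ - Aft)‖
        ≤ 2 * η * ((2 * Real.sqrt Γ) * ε * (5 * Γ)) := by
          apply mul_le_mul_of_nonneg_left step (by linarith)
      _ ≤ 32 * η * ε * Γ ^ ((3 : ℝ) / 2) := by
          rw [hrpow]; nlinarith [mul_nonneg (mul_nonneg hη.le hε0) (mul_nonneg hΓ0.le hsqrt0)]
end

section
/- Consider the unregularized (λ = 0) finite-batch fine-tuning update, and let S be a symmetric d×d matrix with ‖S − I‖_op ≤ ε where ε ≤ 1/4. Let (W₁, W₂) and (V₁, V₂) be two well-conditioned pairs and set ε₀ = max{‖W₁ − V₁‖_op, ‖W₂ − V₂‖_op}. Let (W₁', W₂') and (V₁', V₂') be the results of one finite-batch update with the same covariance S applied to (W₁, W₂) and to (V₁, V₂), respectively. Then max{‖W₁' − V₁'‖_op, ‖W₂' − V₂'‖_op} ≤ (1 + 64·η·Γ)·ε₀. -/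
open Matrix

open scoped Matrix.Norms.L2Operator

section Aux

open scoped Matrix.Norms.L2Operator

variable {d : ℕ}


lemma opnorm_transpose (A : Matrix (Fin d) (Fin d) ℝ) : ‖Aᵀ‖ = ‖A‖ := by
  rw [← Matrix.conjTranspose_eq_transpose_of_trivial, Matrix.l2_opNorm_conjTranspose]

lemma opnorm_one_le : ‖(1 : Matrix (Fin d) (Fin d) ℝ)‖ ≤ 1 := by
  have h := Matrix.l2_opNorm_conjTranspose_mul_self (1 : Matrix (Fin d) (Fin d) ℝ)
  simp only [conjTranspose_one, one_mul] at h
  nlinarith [norm_nonneg (1 : Matrix (Fin d) (Fin d) ℝ)]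

lemma opnorm_orth_le {U : Matrix (Fin d) (Fin d) ℝ} (hU : Uᵀ * U = 1) : ‖U‖ ≤ 1 := by
  have h := Matrix.l2_opNorm_conjTranspose_mul_self U
  rw [Matrix.conjTranspose_eq_transpose_of_trivial, hU] at h
  have h1 : ‖(1 : Matrix (Fin d) (Fin d) ℝ)‖ ≤ 1 := opnorm_one_le
  nlinarith [norm_nonneg U]

lemma opnorm_diagonal_le {v : Fin d → ℝ} {c : ℝ} (hc : 0 ≤ c) (h : ∀ i, |v i| ≤ c) :
    ‖Matrix.diagonal v‖ ≤ c := by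
  rw [Matrix.l2_opNorm_def]
  refine ContinuousLinearMap.opNorm_le_bound _ hc fun x => ?_
  have hx : ((Matrix.toEuclideanLin.trans LinearMap.toContinuousLinearMap)
      (Matrix.diagonal v)) x = (WithLp.equiv 2 (Fin d → ℝ)).symm
        (fun i => v i * (x i)) := by
    ext i
    simp [Matrix.toEuclideanLin_apply, Matrix.mulVec_diagonal]
  rw [hx]
  rw [EuclideanSpace.norm_eq, EuclideanSpace.norm_eq]
  have hsum : ∑ i, ‖(WithLp.equiv 2 (Fin d → ℝ)).symm (fun i => v i * (x i)) i‖ ^ 2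
      ≤ c ^ 2 * ∑ i, ‖x i‖ ^ 2 := by
    rw [Finset.mul_sum]
    refine Finset.sum_le_sum fun i _ => ?_
    have hvi : ‖v i‖ ≤ c := by rw [Real.norm_eq_abs]; exact h i
    have : ‖(WithLp.equiv 2 (Fin d → ℝ)).symm (fun i => v i * (x i)) i‖ = ‖v i‖ * ‖x i‖ := by
      simp [norm_mul]
    rw [this]
    have h2 : 0 ≤ ‖x i‖ := norm_nonneg _
    have h3 : 0 ≤ ‖v i‖ := norm_nonneg _
    have h4 : ‖v i‖ * ‖v i‖ ≤ c * c := mul_le_mul hvi hvi h3 hc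
    nlinarith [sq_nonneg (‖x i‖), mul_le_mul_of_nonneg_right h4 (sq_nonneg ‖x i‖)]
  calc Real.sqrt (∑ i, ‖(WithLp.equiv 2 (Fin d → ℝ)).symm (fun i => v i * (x i)) i‖ ^ 2)
      ≤ Real.sqrt (c ^ 2 * ∑ i, ‖x i‖ ^ 2) := Real.sqrt_le_sqrt hsum
    _ = c * Real.sqrt (∑ i, ‖x i‖ ^ 2) := by
        rw [Real.sqrt_mul (sq_nonneg c), Real.sqrt_sq hc]

lemma mul3_le {A B C : Matrix (Fin d) (Fin d) ℝ} {a b c : ℝ}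
    (hA : ‖A‖ ≤ a) (hB : ‖B‖ ≤ b) (hC : ‖C‖ ≤ c) (ha : 0 ≤ a) (hb : 0 ≤ b) :
    ‖A * B * C‖ ≤ a * b * c := by
  calc ‖A * B * C‖ ≤ ‖A * B‖ * ‖C‖ := Matrix.l2_opNorm_mul _ _
    _ ≤ (‖A‖ * ‖B‖) * ‖C‖ :=
        mul_le_mul_of_nonneg_right (Matrix.l2_opNorm_mul _ _) (norm_nonneg _)
    _ ≤ a * b * c :=
        mul_le_mul (mul_le_mul hA hB (norm_nonneg _) ha) hC (norm_nonneg _)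
          (mul_nonneg ha hb)


end Aux

set_option maxHeartbeats 1000000 in
/-- the unregularized finite-batch update with covariance `S`,
`‖S − I‖_op ≤ ε ≤ 1/4`, is `(1 + 64ηΓ)`-Lipschitz (in operator norm, componentwise) on
well-conditioned pairs. -/
theorem finite_batch_update_lipschitz {d : ℕ} (hd : 1 ≤ d)
    (U V : Matrix (Fin d) (Fin d) ℝ)
    (hU : U * Uᵀ = 1) (hU' : Uᵀ * U = 1) (hV : V * Vᵀ = 1) (hV' : Vᵀ * V = 1)
    (σ : Fin d → ℝ) (hσpos : ∀ i, 0 < σ i) (hσanti : StrictAnti σ)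
    (σft : Fin d → ℝ) (hσftpos : ∀ i, 0 < σft i)
    (Aft : Matrix (Fin d) (Fin d) ℝ) (hAft : Aft = U * Matrix.diagonal σft * Vᵀ)
    (Γ : ℝ) (hΓ : Γ = max (σ ⟨0, hd⟩) (Finset.univ.sup' ⟨⟨0, hd⟩, Finset.mem_univ _⟩ σft))
    (η : ℝ) (hη : 0 < η)
    (ε : ℝ) (hε : ε ≤ 1 / 4)
    (S : Matrix (Fin d) (Fin d) ℝ) (hSsymm : Sᵀ = S) (hS : ‖S - 1‖ ≤ ε)
    (W₁ W₂ V₁ V₂ : Matrix (Fin d) (Fin d) ℝ)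
    (hW₁ : ‖W₁‖ ≤ 2 * Real.sqrt Γ) (hW₂ : ‖W₂‖ ≤ 2 * Real.sqrt Γ)
    (hV₁ : ‖V₁‖ ≤ 2 * Real.sqrt Γ) (hV₂ : ‖V₂‖ ≤ 2 * Real.sqrt Γ)
    (ε₀ : ℝ) (hε₀ : ε₀ = max ‖W₁ - V₁‖ ‖W₂ - V₂‖) :
    max ‖(ftStep η 0 Aft 0 S (W₁, W₂)).1 - (ftStep η 0 Aft 0 S (V₁, V₂)).1‖
        ‖(ftStep η 0 Aft 0 S (W₁, W₂)).2 - (ftStep η 0 Aft 0 S (V₁, V₂)).2‖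
      ≤ (1 + 64 * η * Γ) * ε₀ := by
  simp only [ftStep]
  have hΓ0 : 0 < Γ := by
    rw [hΓ]; exact lt_of_lt_of_le (hσpos _) (le_max_left _ _)
  set g := Real.sqrt Γ with hgdef
  have hg0 : 0 ≤ g := Real.sqrt_nonneg _
  have hgg : g * g = Γ := Real.mul_self_sqrt hΓ0.le
  have hε₀0 : 0 ≤ ε₀ := by rw [hε₀]; exact le_max_of_le_left (norm_nonneg _)
  have e1 : ‖W₁ - V₁‖ ≤ ε₀ := hε₀ ▸ le_max_left _ _
  have e2 : ‖W₂ - V₂‖ ≤ ε₀ := hε₀ ▸ le_max_right _ _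
  have hSle : ‖S‖ ≤ 5 / 4 := by
    calc ‖S‖ = ‖(S - 1) + 1‖ := by rw [sub_add_cancel]
      _ ≤ ‖S - 1‖ + ‖(1 : Matrix (Fin d) (Fin d) ℝ)‖ := norm_add_le _ _
      _ ≤ ε + 1 := add_le_add hS opnorm_one_le
      _ ≤ 5 / 4 := by linarith
  have hUle : ‖U‖ ≤ 1 := opnorm_orth_le hU'
  have hVtle : ‖Vᵀ‖ ≤ 1 := opnorm_orth_le (by rw [Matrix.transpose_transpose]; exact hV)
  have hDle : ‖Matrix.diagonal σft‖ ≤ Γ := by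
    refine opnorm_diagonal_le hΓ0.le fun i => ?_
    rw [abs_of_pos (hσftpos i), hΓ]
    exact le_max_of_le_right (Finset.le_sup' σft (Finset.mem_univ i))
  have hAle : ‖Aft‖ ≤ Γ := by
    rw [hAft]
    calc ‖U * Matrix.diagonal σft * Vᵀ‖ ≤ 1 * Γ * 1 :=
        mul3_le hUle hDle hVtle zero_le_one hΓ0.le
      _ = Γ := by ring
  have hQ : ‖V₁ * V₂ - Aft‖ ≤ 5 * Γ := by
    calc ‖V₁ * V₂ - Aft‖ ≤ ‖V₁ * V₂‖ + ‖Aft‖ := norm_sub_le _ _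
      _ ≤ ‖V₁‖ * ‖V₂‖ + Γ := add_le_add (Matrix.l2_opNorm_mul _ _) hAle
      _ ≤ (2 * g) * (2 * g) + Γ := by
          have := mul_le_mul hV₁ hV₂ (norm_nonneg _) (by positivity)
          linarith
      _ = 5 * Γ := by linear_combination 4 * hgg
  have hP : ‖W₁ * W₂ - Aft‖ ≤ 5 * Γ := by
    calc ‖W₁ * W₂ - Aft‖ ≤ ‖W₁ * W₂‖ + ‖Aft‖ := norm_sub_le _ _
      _ ≤ ‖W₁‖ * ‖W₂‖ + Γ := add_le_add (Matrix.l2_opNorm_mul _ _) hAle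
      _ ≤ (2 * g) * (2 * g) + Γ := by
          have := mul_le_mul hW₁ hW₂ (norm_nonneg _) (by positivity)
          linarith
      _ = 5 * Γ := by linear_combination 4 * hgg
  have hT1 : ‖(W₁ - V₁) * W₂ + V₁ * (W₂ - V₂)‖ ≤ 4 * g * ε₀ := by
    calc ‖(W₁ - V₁) * W₂ + V₁ * (W₂ - V₂)‖
        ≤ ‖(W₁ - V₁) * W₂‖ + ‖V₁ * (W₂ - V₂)‖ := norm_add_le _ _
      _ ≤ ‖W₁ - V₁‖ * ‖W₂‖ + ‖V₁‖ * ‖W₂ - V₂‖ :=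
          add_le_add (Matrix.l2_opNorm_mul _ _) (Matrix.l2_opNorm_mul _ _)
      _ ≤ ε₀ * (2 * g) + (2 * g) * ε₀ :=
          add_le_add (mul_le_mul e1 hW₂ (norm_nonneg _) hε₀0)
            (mul_le_mul hV₁ e2 (norm_nonneg _) (by positivity))
      _ = 4 * g * ε₀ := by ring
  have key1 : (W₁ - (2 * η) • ((W₁ * W₂ - Aft) * S * W₂ᵀ)
      - (2 * η * 0) • ((W₁ * W₂ - 0) * W₂ᵀ)) - (V₁ - (2 * η) • ((V₁ * V₂ - Aft) * S * V₂ᵀ)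
      - (2 * η * 0) • ((V₁ * V₂ - 0) * V₂ᵀ))
      = (W₁ - V₁) - (2 * η) • (((W₁ - V₁) * W₂ + V₁ * (W₂ - V₂)) * S * W₂ᵀ
          + (V₁ * V₂ - Aft) * S * (W₂ - V₂)ᵀ) := by
    simp only [mul_zero, zero_smul, sub_zero]
    simp only [Matrix.transpose_sub, sub_mul, mul_sub, add_mul, smul_sub, smul_add]
    abel
  have key2 : (W₂ - (2 * η) • (W₁ᵀ * S * (W₁ * W₂ - Aft))
      - (2 * η * 0) • (W₁ᵀ * (W₁ * W₂ - 0))) - (V₂ - (2 * η) • (V₁ᵀ * S * (V₁ * V₂ - Aft))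
      - (2 * η * 0) • (V₁ᵀ * (V₁ * V₂ - 0)))
      = (W₂ - V₂) - (2 * η) • ((W₁ - V₁)ᵀ * S * (W₁ * W₂ - Aft)
          + V₁ᵀ * S * ((W₁ - V₁) * W₂ + V₁ * (W₂ - V₂))) := by
    have h : (W₁ - V₁) * W₂ + V₁ * (W₂ - V₂) = W₁ * W₂ - V₁ * V₂ := by
      simp only [sub_mul, mul_sub]; abel
    rw [h]
    simp only [mul_zero, zero_smul, sub_zero, Matrix.transpose_sub, sub_mul, mul_sub,
      smul_sub, smul_add, add_mul]
    abel
  have b1 : ‖((W₁ - V₁) * W₂ + V₁ * (W₂ - V₂)) * S * W₂ᵀ‖ ≤ (4 * g * ε₀) * (5 / 4) * (2 * g) :=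
    mul3_le hT1 hSle (by rw [opnorm_transpose]; exact hW₂) (by positivity) (by norm_num)
  have b2 : ‖(V₁ * V₂ - Aft) * S * (W₂ - V₂)ᵀ‖ ≤ (5 * Γ) * (5 / 4) * ε₀ :=
    mul3_le hQ hSle (by rw [opnorm_transpose]; exact e2) (by positivity) (by norm_num)
  have b3 : ‖(W₁ - V₁)ᵀ * S * (W₁ * W₂ - Aft)‖ ≤ ε₀ * (5 / 4) * (5 * Γ) :=
    mul3_le (by rw [opnorm_transpose]; exact e1) hSle hP hε₀0 (by norm_num)
  have b4 : ‖V₁ᵀ * S * ((W₁ - V₁) * W₂ + V₁ * (W₂ - V₂))‖ ≤ (2 * g) * (5 / 4) * (4 * g * ε₀) :=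
    mul3_le (by rw [opnorm_transpose]; exact hV₁) hSle hT1 (by positivity) (by norm_num)
  have h2η : ‖(2 * η : ℝ)‖ = 2 * η := by
    rw [Real.norm_eq_abs, abs_of_pos]; linarith
  have hηnn : (0:ℝ) ≤ 2 * η := by linarith
  refine max_le ?_ ?_
  · rw [key1]
    calc ‖(W₁ - V₁) - (2 * η) • (((W₁ - V₁) * W₂ + V₁ * (W₂ - V₂)) * S * W₂ᵀ
          + (V₁ * V₂ - Aft) * S * (W₂ - V₂)ᵀ)‖
        ≤ ‖W₁ - V₁‖ + ‖(2 * η) • (((W₁ - V₁) * W₂ + V₁ * (W₂ - V₂)) * S * W₂ᵀ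
          + (V₁ * V₂ - Aft) * S * (W₂ - V₂)ᵀ)‖ := norm_sub_le _ _
      _ = ‖W₁ - V₁‖ + (2 * η) * ‖((W₁ - V₁) * W₂ + V₁ * (W₂ - V₂)) * S * W₂ᵀ
          + (V₁ * V₂ - Aft) * S * (W₂ - V₂)ᵀ‖ := by rw [norm_smul, h2η]
      _ ≤ ε₀ + (2 * η) * ((4 * g * ε₀) * (5 / 4) * (2 * g) + (5 * Γ) * (5 / 4) * ε₀) := by
          refine add_le_add e1 (mul_le_mul_of_nonneg_left ?_ hηnn)
          exact le_trans (norm_add_le _ _) (add_le_add b1 b2)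
      _ ≤ (1 + 64 * η * Γ) * ε₀ := by
          nlinarith [mul_nonneg (mul_nonneg hη.le hΓ0.le) hε₀0, hgg]
  · rw [key2]
    calc ‖(W₂ - V₂) - (2 * η) • ((W₁ - V₁)ᵀ * S * (W₁ * W₂ - Aft)
          + V₁ᵀ * S * ((W₁ - V₁) * W₂ + V₁ * (W₂ - V₂)))‖
        ≤ ‖W₂ - V₂‖ + ‖(2 * η) • ((W₁ - V₁)ᵀ * S * (W₁ * W₂ - Aft)
          + V₁ᵀ * S * ((W₁ - V₁) * W₂ + V₁ * (W₂ - V₂)))‖ := norm_sub_le _ _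
      _ = ‖W₂ - V₂‖ + (2 * η) * ‖(W₁ - V₁)ᵀ * S * (W₁ * W₂ - Aft)
          + V₁ᵀ * S * ((W₁ - V₁) * W₂ + V₁ * (W₂ - V₂))‖ := by rw [norm_smul, h2η]
      _ ≤ ε₀ + (2 * η) * (ε₀ * (5 / 4) * (5 * Γ) + (2 * g) * (5 / 4) * (4 * g * ε₀)) := by
          refine add_le_add e2 (mul_le_mul_of_nonneg_left ?_ hηnn)
          exact le_trans (norm_add_le _ _) (add_le_add b3 b4)
      _ ≤ (1 + 64 * η * Γ) * ε₀ := by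
          nlinarith [mul_nonneg (mul_nonneg hη.le hΓ0.le) hε₀0, hgg]
end
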